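/- arXiv:1005.3197 — 5 statements merged into one kernel-verified Lean document; each statement's English description precedes it below -/
import Mathlib

section
/- Let Z ⊆ B(H₀) be a JC*-triple and (T, ρ) a universal enveloping TRO of Z. Then there exists a continuous complex-linear bijection θ : T → T such that θ(x y* z) = θ(z) θ(y)* θ(x) for all x,y,z ∈ T, θ ∘ θ = id_T, and θ ∘ ρ = ρ (the canonical TRO-antiautomorphism of order 2). -/
noncomputable section

open Matrix

/-- A bundled complex Hilbert space. -/
structure HilbertC : Type 1 where
  carrier : Type
  [nacg : NormedAddCommGroup carrier]
  [ips : InnerProductSpace ℂ carrier]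
  [cs : CompleteSpace carrier]

attribute [instance] HilbertC.nacg HilbertC.ips HilbertC.cs

/-- The algebra `B(H)` of bounded operators on a complex Hilbert space `H`. -/
abbrev BH (H : HilbertC) := H.carrier →L[ℂ] H.carrier

/-- The Jordan triple product `{x,y,z} = (1/2)(x y* z + z y* x)`. -/
def jtp {A : Type*} [NonUnitalRing A] [StarRing A] [Module ℂ A] (x y z : A) : A :=
  (2⁻¹ : ℂ) • (x * star y * z + z * star y * x)

/-- `Z` is a JC*-triple: a closed complex subspace of `B(H)` closed under the
Jordan triple product. -/
def IsJCTriple {H : HilbertC} (Z : Submodule ℂ (BH H)) : Prop :=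
  IsClosed (Z : Set (BH H)) ∧ ∀ x ∈ Z, ∀ y ∈ Z, ∀ z ∈ Z, jtp x y z ∈ Z

/-- `T` is a TRO: a closed complex subspace of `B(H)` with `x y* z ∈ T`. -/
def IsTROsub {H : HilbertC} (T : Submodule ℂ (BH H)) : Prop :=
  IsClosed (T : Set (BH H)) ∧ ∀ x ∈ T, ∀ y ∈ T, ∀ z ∈ T, x * star y * z ∈ T

/-- The smallest closed complex subspace of `B(H)` containing `S` and closed under
the ternary product `(x,y,z) ↦ x y* z`. -/
def troClosure {H : HilbertC} (S : Set (BH H)) : Submodule ℂ (BH H) :=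
  sInf {W : Submodule ℂ (BH H) | IsClosed (W : Set (BH H)) ∧ S ⊆ W ∧
    ∀ x ∈ W, ∀ y ∈ W, ∀ z ∈ W, x * star y * z ∈ W}

/-- A triple homomorphism from a subspace `Z ⊆ B(H)` into `B(K)`. -/
def IsTripleHomB {H K : HilbertC} (Z : Submodule ℂ (BH H)) (φ : ↥Z →L[ℂ] BH K) : Prop :=
  ∀ x y z w : ↥Z, (w : BH H) = jtp (x : BH H) (y : BH H) (z : BH H) →
    φ w = jtp (φ x) (φ y) (φ z)

/-- A triple homomorphism from a subspace `Z ⊆ B(H)` into a subspace `U ⊆ B(K)`. -/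
def IsTripleHomInto {H K : HilbertC} (Z : Submodule ℂ (BH H)) (U : Submodule ℂ (BH K))
    (α : ↥Z →L[ℂ] ↥U) : Prop :=
  ∀ x y z w : ↥Z, (w : BH H) = jtp (x : BH H) (y : BH H) (z : BH H) →
    ((α w : BH K)) = jtp ((α x : BH K)) ((α y : BH K)) ((α z : BH K))

/-- A TRO-homomorphism between subspaces of operator algebras. -/
def IsTROHom {H K : HilbertC} (T : Submodule ℂ (BH H)) (U : Submodule ℂ (BH K))
    (β : ↥T →L[ℂ] ↥U) : Prop :=
  ∀ x y z w : ↥T, (w : BH H) = (x : BH H) * star (y : BH H) * (z : BH H) →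
    ((β w : BH K)) = (β x : BH K) * star ((β y : BH K)) * ((β z : BH K))

/-- `(T, ρ)` is a universal enveloping TRO of `Z`. -/
def IsUnivTRO {H Hh : HilbertC} (Z : Submodule ℂ (BH H)) (T : Submodule ℂ (BH Hh))
    (ρ : ↥Z →L[ℂ] ↥T) : Prop :=
  IsTROsub T ∧ IsTripleHomInto Z T ρ ∧
  troClosure (Set.range fun z : ↥Z => (ρ z : BH Hh)) = T ∧
  ∀ (K : HilbertC) (U : Submodule ℂ (BH K)), IsTROsub U →
    ∀ α : ↥Z →L[ℂ] ↥U, IsTripleHomInto Z U α →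
      ∃ β : ↥T →L[ℂ] ↥U, IsTROHom T U β ∧ ∀ z, β (ρ z) = α z

/-!
Transposition with respect to a Hilbert basis of `Ĥ` is a continuous linear involution `τ` of
`B(Ĥ)` that reverses the ternary product: `τ (x y* z) = τ z (τ y)* τ x`. Hence `τ(T)` is a TRO
and, the Jordan triple product being symmetric in its outer variables, `τ ∘ ρ` is a triple
homomorphism into it. Universality gives a TRO-homomorphism `β : T → τ(T)` with
`β ∘ ρ = τ ∘ ρ`, and `θ = τ ∘ β` reverses the ternary product and fixes `ρ(Z)`. Then `θ ∘ θ` is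
a TRO-homomorphism fixing `ρ(Z)`, which generates `T`, so `θ ∘ θ = id`.
-/

open ContinuousLinearMap

def ReversesTernary {A B : Type*} [Mul A] [Star A] [Mul B] [Star B] (f : A → B) : Prop :=
  ∀ x y z, f (x * star y * z) = f z * star (f y) * f x

namespace HilbertBasis

variable {𝕜 ι E : Type*} [RCLike 𝕜] [NormedAddCommGroup E] [InnerProductSpace 𝕜 E]
  (b : HilbertBasis ι 𝕜 E)

def conj : E ≃ₗᵢ⋆[𝕜] E :=
  (b.repr.trans (starₗᵢ 𝕜)).trans b.repr.symm

lemma conj_apply (v : E) : b.conj v = b.repr.symm (star (b.repr v)) := rfl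

@[simp] lemma conj_conj (v : E) : b.conj (b.conj v) = v := by simp [conj_apply]

@[simp] lemma inner_conj_conj (u v : E) : inner 𝕜 (b.conj u) (b.conj v) = inner 𝕜 v u := by
  rw [conj_apply, conj_apply, b.repr.symm.inner_map_map, ← b.repr.inner_map_map v u,
    lp.inner_eq_tsum, lp.inner_eq_tsum]
  congr 1 with i
  simp [RCLike.inner_apply, mul_comm]

variable [CompleteSpace E]

/-- The matrix of `b.transpose A` in the basis `b` is the transpose of that of `A`. -/
def transpose : (E →L[𝕜] E) →L[𝕜] E →L[𝕜] E :=
  LinearMap.mkContinuous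
    { toFun := fun A => (b.conj : E →SL[starRingEnd 𝕜] E).comp
        ((adjoint A).comp (b.conj : E →SL[starRingEnd 𝕜] E))
      map_add' := fun A B => by ext v; simp
      map_smul' := fun c A => by ext v; simp [map_smulₛₗ] }
    1 fun A => by
      refine opNorm_le_bound _ (by positivity) fun v => ?_
      simpa using (adjoint A).le_opNorm (b.conj v)

lemma transpose_apply (A : E →L[𝕜] E) (v : E) :
    b.transpose A v = b.conj (adjoint A (b.conj v)) := rfl

lemma adjoint_transpose (A : E →L[𝕜] E) : adjoint (b.transpose A) = b.transpose (adjoint A) := by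
  refine ((eq_adjoint_iff _ _).mpr fun u v => ?_).symm
  rw [transpose_apply, transpose_apply, adjoint_adjoint]
  conv_lhs => rw [← b.conj_conj v]
  rw [inner_conj_conj, ← adjoint_inner_left, ← b.inner_conj_conj (b.conj u), conj_conj]

@[simp] lemma transpose_transpose (A : E →L[𝕜] E) : b.transpose (b.transpose A) = A := by
  ext v; simp [transpose_apply, adjoint_transpose]

lemma transpose_mul (A B : E →L[𝕜] E) : b.transpose (A * B) = b.transpose B * b.transpose A := by
  ext v; simp [transpose_apply, mul_def]

lemma reversesTernary_transpose : ReversesTernary b.transpose := fun A B C => by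
  rw [transpose_mul, transpose_mul, star_eq_adjoint, star_eq_adjoint, adjoint_transpose, mul_assoc]

end HilbertBasis

lemma ReversesTernary.map_jtp {A B F : Type*} [NonUnitalRing A] [StarRing A] [Module ℂ A]
    [NonUnitalRing B] [StarRing B] [Module ℂ B] [FunLike F A B] [LinearMapClass F ℂ A B] {f : F}
    (hf : ReversesTernary f) (x y z : A) : f (jtp x y z) = jtp (f x) (f y) (f z) := by
  rw [jtp, jtp, map_smul, map_add, hf, hf, add_comm]

section TRO

variable {H K L : HilbertC}

lemma subset_troClosure (S : Set (BH H)) : S ⊆ troClosure S := fun _ hx =>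
  Submodule.mem_sInf.mpr fun _ hW => hW.2.1 hx

lemma troClosure_le {S : Set (BH H)} {W : Submodule ℂ (BH H)} (hW : IsClosed (W : Set (BH H)))
    (hSW : S ⊆ W) (hW_ternary : ∀ x ∈ W, ∀ y ∈ W, ∀ z ∈ W, x * star y * z ∈ W) :
    troClosure S ≤ W :=
  sInf_le ⟨hW, hSW, hW_ternary⟩

def IsTROAntiHom (T : Submodule ℂ (BH H)) (U : Submodule ℂ (BH K)) (β : ↥T →L[ℂ] ↥U) : Prop :=
  ∀ x y z w : ↥T, (w : BH H) = (x : BH H) * star (y : BH H) * (z : BH H) →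
    (β w : BH K) = (β z : BH K) * star (β y : BH K) * (β x : BH K)

lemma isTROHom_id (T : Submodule ℂ (BH H)) : IsTROHom T T (ContinuousLinearMap.id ℂ T) :=
  fun _ _ _ _ h => h

lemma IsTROAntiHom.comp {T : Submodule ℂ (BH H)} {U : Submodule ℂ (BH K)}
    {V : Submodule ℂ (BH L)} {g : U →L[ℂ] V} {f : T →L[ℂ] U} (hg : IsTROAntiHom U V g)
    (hf : IsTROAntiHom T U f) : IsTROHom T V (g.comp f) :=
  fun x y z w h => hg (f z) (f y) (f x) (f w) (hf x y z w h)

lemma IsTROHom.ext_of_troClosure_eq {T : Submodule ℂ (BH H)} {U : Submodule ℂ (BH K)}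
    {S : Set (BH H)} {β₁ β₂ : T →L[ℂ] U} (hT : IsTROsub T) (hS : troClosure S = T)
    (h₁ : IsTROHom T U β₁) (h₂ : IsTROHom T U β₂)
    (heq : ∀ x : T, (x : BH H) ∈ S → β₁ x = β₂ x) : β₁ = β₂ := by
  set W : Submodule ℂ (BH H) := (LinearMap.ker ((β₁ - β₂ : T →L[ℂ] U) : T →ₗ[ℂ] U)).map T.subtype
  have mem_W_iff (x : T) : (x : BH H) ∈ W ↔ β₁ x = β₂ x := by
    simp [W, sub_eq_zero]
  have hW_closed : IsClosed (W : Set (BH H)) := by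
    rw [Submodule.map_coe]
    exact hT.1.isClosedEmbedding_subtypeVal.isClosedMap _ (β₁ - β₂).isClosed_ker
  have hW_ternary : ∀ x ∈ W, ∀ y ∈ W, ∀ z ∈ W, x * star y * z ∈ W := by
    rintro _ ⟨x, hx, rfl⟩ _ ⟨y, hy, rfl⟩ _ ⟨z, hz, rfl⟩
    replace hx := (mem_W_iff x).mp ⟨x, hx, rfl⟩
    replace hy := (mem_W_iff y).mp ⟨y, hy, rfl⟩
    replace hz := (mem_W_iff z).mp ⟨z, hz, rfl⟩
    refine (mem_W_iff ⟨_, hT.2 x x.2 y y.2 z z.2⟩).mpr (Subtype.ext ?_)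
    rw [h₁ x y z _ rfl, h₂ x y z _ rfl, hx, hy, hz]
  have hSW : S ⊆ W := fun x hx =>
    have hxT : x ∈ T := hS ▸ subset_troClosure S hx
    (mem_W_iff ⟨x, hxT⟩).mpr (heq ⟨x, hxT⟩ hx)
  ext1 x
  exact (mem_W_iff x).mp (hS ▸ troClosure_le hW_closed hSW hW_ternary <| x.2)

lemma IsTROsub.map_of_reversesTernary {τ : BH K →L[ℂ] BH K} {T : Submodule ℂ (BH K)}
    (hT : IsTROsub T) (hτ : ReversesTernary τ) (hinv : Function.Involutive τ) :
    IsTROsub (T.map (τ : BH K →ₗ[ℂ] BH K)) := by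
  refine ⟨?_, ?_⟩
  · rw [Submodule.map_coe, ContinuousLinearMap.coe_coe,
      Set.image_eq_preimage_of_inverse hinv.leftInverse hinv.rightInverse]
    exact hT.1.preimage τ.continuous
  · rintro _ ⟨x, hx, rfl⟩ _ ⟨y, hy, rfl⟩ _ ⟨z, hz, rfl⟩
    exact ⟨z * star y * x, hT.2 z hz y hy x hx, hτ z y x⟩

lemma IsTripleHomInto.restrict_comp {τ : BH K →L[ℂ] BH L} {Z : Submodule ℂ (BH H)}
    {T : Submodule ℂ (BH K)} {V : Submodule ℂ (BH L)} {ρ : Z →L[ℂ] T} (hρ : IsTripleHomInto Z T ρ)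
    (hτ : ReversesTernary τ) (hTV : ∀ x ∈ T, τ x ∈ V) :
    IsTripleHomInto Z V ((τ.restrict hTV).comp ρ) := fun x y z w h => by
  simp only [ContinuousLinearMap.comp_apply, ContinuousLinearMap.coe_restrict_apply]
  rw [hρ x y z w h, hτ.map_jtp]

lemma IsTROHom.restrict_comp {τ : BH K →L[ℂ] BH L} {T : Submodule ℂ (BH H)}
    {U : Submodule ℂ (BH K)} {V : Submodule ℂ (BH L)} {β : T →L[ℂ] U} (hβ : IsTROHom T U β)
    (hτ : ReversesTernary τ) (hUV : ∀ x ∈ U, τ x ∈ V) :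
    IsTROAntiHom T V ((τ.restrict hUV).comp β) := fun x y z w h => by
  simp only [ContinuousLinearMap.comp_apply, ContinuousLinearMap.coe_restrict_apply]
  rw [hβ x y z w h, hτ]

end TRO

theorem stmt_4_general (H₀ Hh : HilbertC) (Z : Submodule ℂ (BH H₀))
    (T : Submodule ℂ (BH Hh)) (ρ : ↥Z →L[ℂ] ↥T) (hT : IsUnivTRO Z T ρ) :
    ∃ θ : ↥T →L[ℂ] ↥T, Function.Bijective θ ∧
      (∀ x y z w : ↥T, (w : BH Hh) = (x : BH Hh) * star (y : BH Hh) * (z : BH Hh) →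
        ((θ w : BH Hh)) = (θ z : BH Hh) * star ((θ y : BH Hh)) * ((θ x : BH Hh))) ∧
      (∀ t, θ (θ t) = t) ∧ (∀ z, θ (ρ z) = ρ z) := by
  obtain ⟨hT_tro, hρ, hT_gen, hT_univ⟩ := hT
  obtain ⟨_, b, -⟩ := exists_hilbertBasis ℂ Hh.carrier
  set τ := b.transpose
  have hτ : ReversesTernary τ := b.reversesTernary_transpose
  have hinv : Function.Involutive τ := b.transpose_transpose
  set U := T.map (τ : BH Hh →ₗ[ℂ] BH Hh)
  have hTU : ∀ x ∈ T, τ x ∈ U := fun x hx => Submodule.mem_map_of_mem hx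
  have hUT : ∀ x ∈ U, τ x ∈ T := by
    rintro _ ⟨x, hx, rfl⟩
    rwa [ContinuousLinearMap.coe_coe, hinv]
  obtain ⟨β, hβ, hβρ⟩ := hT_univ Hh U (hT_tro.map_of_reversesTernary hτ hinv)
    ((τ.restrict hTU).comp ρ) (hρ.restrict_comp hτ hTU)
  set θ := (τ.restrict hUT).comp β
  have hθ : IsTROAntiHom T T θ := hβ.restrict_comp hτ hUT
  have hθρ (z : Z) : θ (ρ z) = ρ z := Subtype.ext <| by
    simp [θ, hβρ, hinv _]
  have hθθ : θ.comp θ = .id ℂ T := (hθ.comp hθ).ext_of_troClosure_eq hT_tro hT_gen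
    (isTROHom_id T) fun _ ⟨z, hz⟩ => by simp [← Subtype.ext_iff.mpr hz, hθρ]
  have hθ_inv : Function.Involutive θ := DFunLike.congr_fun hθθ
  exact ⟨θ, hθ_inv.bijective, hθ, hθ_inv, hθρ⟩

/-- the canonical TRO-antiautomorphism of order 2 on the universal
enveloping TRO. -/
theorem stmt_4 (H₀ Hh : HilbertC) (Z : Submodule ℂ (BH H₀)) (hZ : IsJCTriple Z)
    (T : Submodule ℂ (BH Hh)) (ρ : ↥Z →L[ℂ] ↥T) (hT : IsUnivTRO Z T ρ) :
    ∃ θ : ↥T →L[ℂ] ↥T, Function.Bijective θ ∧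
      (∀ x y z w : ↥T, (w : BH Hh) = (x : BH Hh) * star (y : BH Hh) * (z : BH Hh) →
        ((θ w : BH Hh)) = (θ z : BH Hh) * star ((θ y : BH Hh)) * ((θ x : BH Hh))) ∧
      (∀ t, θ (θ t) = t) ∧ (∀ z, θ (ρ z) = ρ z) :=
  stmt_4_general H₀ Hh Z T ρ hT
end
end

section
/- Fix n ≥ 1 and let σ₁ = [[1,0],[0,-1]], σ₂ = [[0,1],[1,0]], σ₃ = [[0,i],[-i,0]] be the Pauli matrices in M₂(ℂ). In M_{2ⁿ}(ℂ), identified with the n-fold Kronecker product M₂(ℂ) ⊗ ⋯ ⊗ M₂(ℂ), define for 0 ≤ l ≤ n−1 the elements s_{2l+1} := σ₃^{⊗l} ⊗ σ₁ ⊗ I₂^{⊗(n−l−1)} and s_{2l+2} := σ₃^{⊗l} ⊗ σ₂ ⊗ I₂^{⊗(n−l−1)}. Let T be the smallest complex linear subspace of M_{2ⁿ}(ℂ) containing {I, s₁, …, s_{2n−1}} and closed under (x,y,z) ↦ x y* z. Then there is a complex-linear bijection Φ : T → M_{2^{n−1}}(ℂ) × M_{2^{n−1}}(ℂ) satisfying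 Φ(x y* z) = Φ(x) Φ(y)* Φ(z), where on the product the ternary operation and adjoint are taken componentwise (i.e. T is TRO-isomorphic to M_{2^{n−1}}(ℂ) ⊕ M_{2^{n−1}}(ℂ)). -/
noncomputable section

open Matrix

/-- The Pauli matrix `σ₁`. -/
def pauli1 : Matrix (Fin 2) (Fin 2) ℂ := !![1, 0; 0, -1]

/-- The Pauli matrix `σ₂`. -/
def pauli2 : Matrix (Fin 2) (Fin 2) ℂ := !![0, 1; 1, 0]

/-- The Pauli matrix `σ₃`. -/
def pauli3 : Matrix (Fin 2) (Fin 2) ℂ := !![0, Complex.I; -Complex.I, 0]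

/-- The `n`-fold Kronecker product of a family of `2 × 2` matrices, realized on the
index set `Fin n → Fin 2` (identifying `M_{2ⁿ}(ℂ)` with `M₂(ℂ) ⊗ ⋯ ⊗ M₂(ℂ)`). -/
def kron {n : ℕ} (M : Fin n → Matrix (Fin 2) (Fin 2) ℂ) :
    Matrix (Fin n → Fin 2) (Fin n → Fin 2) ℂ :=
  Matrix.of fun f g => ∏ i, M i (f i) (g i)

/-- The element `s_{2l+1} = σ₃^{⊗l} ⊗ σ₁ ⊗ I^{⊗(n-l-1)}` (for `b = false`), resp.
`s_{2l+2} = σ₃^{⊗l} ⊗ σ₂ ⊗ I^{⊗(n-l-1)}` (for `b = true`) of the standard spin system. -/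
def spinS (n : ℕ) (l : Fin n) (b : Bool) : Matrix (Fin n → Fin 2) (Fin n → Fin 2) ℂ :=
  kron fun i => if i < l then pauli3 else if i = l then (if b then pauli2 else pauli1) else 1

/-- The smallest complex linear subspace containing `S` and closed under the ternary
product `(x,y,z) ↦ x y* z`. -/
def troSpanA {A : Type*} [NonUnitalRing A] [StarRing A] [Module ℂ A] (S : Set A) :
    Submodule ℂ A :=
  sInf {W : Submodule ℂ A | S ⊆ W ∧ ∀ x ∈ W, ∀ y ∈ W, ∀ z ∈ W, x * star y * z ∈ W}

/-- The TRO generated by the identity together with the elements `s_j`, `1 ≤ j ≤ N`,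
of the standard spin system (`s_{2l+1} = spinS n l false`, `s_{2l+2} = spinS n l true`). -/
def spinTRO (n N : ℕ) : Submodule ℂ (Matrix (Fin n → Fin 2) (Fin n → Fin 2) ℂ) :=
  troSpanA (insert 1 ((fun p : Fin n × Bool => spinS n p.1 p.2) ''
    {p : Fin n × Bool | 2 * (p.1 : ℕ) + (if p.2 then 2 else 1) ≤ N}))

/-! Because `1` lies in the TRO, the TRO is a unital *-algebra. Multiplying `s_{2l+1}` by
`s_{2l+2}`, and cancelling the Jordan–Wigner strings `σ₃^{⊗l}` (since `σ₃² = 1`), shows that it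
contains `σ₁`, `σ₂`, `σ₃` at every site `l < n - 1` but only `σ₁` at the last site, hence every
matrix unit `e_{fg}` with `f` and `g` agreeing in the last tensor factor. Conversely all generators
are diagonal in that last factor. So the TRO is exactly the algebra of matrices that are
block-diagonal with respect to the last tensor factor, the image of
`M_{2^{n-1}} ⊕ M_{2^{n-1}}` under the (injective, *-preserving) block-diagonal embedding. -/

local notation "M₂" => Matrix (Fin 2) (Fin 2) ℂ

section TroSpan

variable {A : Type*} [NonUnitalRing A] [StarRing A] [Module ℂ A] {S : Set A}

theorem subset_troSpanA : S ⊆ troSpanA S :=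
  fun _ hx => Submodule.mem_sInf.mpr fun _ hW => hW.1 hx

theorem mul_star_mul_mem_troSpanA {x y z : A} (hx : x ∈ troSpanA S) (hy : y ∈ troSpanA S)
    (hz : z ∈ troSpanA S) : x * star y * z ∈ troSpanA S :=
  Submodule.mem_sInf.mpr fun W hW => hW.2 x (Submodule.mem_sInf.mp hx W hW) y
    (Submodule.mem_sInf.mp hy W hW) z (Submodule.mem_sInf.mp hz W hW)

theorem troSpanA_le {W : Submodule ℂ A} (hS : S ⊆ W)
    (hW : ∀ x ∈ W, ∀ y ∈ W, ∀ z ∈ W, x * star y * z ∈ W) : troSpanA S ≤ W :=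
  sInf_le ⟨hS, hW⟩

end TroSpan

theorem mul_mem_troSpanA_of_one_mem {A : Type*} [Ring A] [StarRing A] [Module ℂ A] {S : Set A}
    (h1 : 1 ∈ troSpanA S) {x z : A} (hx : x ∈ troSpanA S) (hz : z ∈ troSpanA S) :
    x * z ∈ troSpanA S := by
  simpa using mul_star_mul_mem_troSpanA hx h1 hz

section TernaryRange

variable {R A B : Type*} [CommSemiring R] [NonUnitalSemiring A] [Star A] [Module R A]
  [NonUnitalSemiring B] [Star B] [Module R B]

theorem exists_bijective_ternary_of_eq_range (Ψ : B →ₗ[R] A) (hΨ : Function.Injective Ψ)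
    (hΨt : ∀ x y z, Ψ (x * star y * z) = Ψ x * star (Ψ y) * Ψ z)
    {W : Submodule R A} (hW : W = LinearMap.range Ψ) :
    ∃ Φ : W →ₗ[R] B, Function.Bijective Φ ∧
      ∀ x y z w : W, (w : A) = (x : A) * star (y : A) * (z : A) → Φ w = Φ x * star (Φ y) * Φ z := by
  let Φ := (LinearEquiv.ofEq W _ hW).trans (LinearEquiv.ofInjective Ψ hΨ).symm
  have hΨΦ (w : W) : Ψ (Φ w) = w :=
    congrArg Subtype.val ((LinearEquiv.ofInjective Ψ hΨ).apply_symm_apply _)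
  refine ⟨Φ.toLinearMap, Φ.bijective, fun x y z w hw => hΨ ?_⟩
  simp only [LinearEquiv.coe_coe, hΨt, hΨΦ, hw]

end TernaryRange

namespace Matrix

variable {R ι m o : Type*} [CommSemiring R] [DecidableEq o]

def blockDiagonalReindex (e : m × o ≃ ι) : (o → Matrix m m R) →ₗ[R] Matrix ι ι R where
  toFun d := reindex e e (blockDiagonal d)
  map_add' d d' := by simp [blockDiagonal_add, submatrix_add]
  map_smul' c d := by simp [blockDiagonal_smul, submatrix_smul]

variable (e : m × o ≃ ι)

theorem blockDiagonalReindex_apply (d : o → Matrix m m R) :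
    blockDiagonalReindex e d = reindex e e (blockDiagonal d) := rfl

theorem blockDiagonalReindex_injective :
    Function.Injective (blockDiagonalReindex (R := R) e) :=
  (reindex e e).injective.comp blockDiagonal_injective

theorem mem_range_blockDiagonalReindex_iff {x : Matrix ι ι R} :
    x ∈ LinearMap.range (blockDiagonalReindex e) ↔
      ∀ i j, (e.symm i).2 ≠ (e.symm j).2 → x i j = 0 := by
  refine ⟨?_, fun hx => ⟨blockDiag (reindex e.symm e.symm x), ?_⟩⟩
  · rintro ⟨d, rfl⟩ i j h
    exact blockDiagonal_apply_ne d _ _ h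
  · ext i j
    rw [blockDiagonalReindex_apply, reindex_apply, submatrix_apply, blockDiagonal_apply]
    split_ifs with h
    · simp only [blockDiag_apply, reindex_apply, submatrix_apply, Prod.mk.eta, Equiv.symm_symm,
        Equiv.apply_symm_apply]
      rw [h, Prod.mk.eta, Equiv.apply_symm_apply]
    · exact (hx i j h).symm

theorem blockDiagonalReindex_mul_star_mul [StarRing R] [Fintype m] [Fintype o] [Fintype ι]
    (x y z : o → Matrix m m R) :
    blockDiagonalReindex e (x * star y * z) =
      blockDiagonalReindex e x * star (blockDiagonalReindex e y) * blockDiagonalReindex e z := by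
  simp only [blockDiagonalReindex_apply, reindex_apply, submatrix_mul_equiv,
    star_eq_conjTranspose, conjTranspose_submatrix, blockDiagonal_conjTranspose,
    ← blockDiagonal_mul]
  rfl

end Matrix

theorem pauli3_mul_self : pauli3 * pauli3 = 1 := by
  ext i j
  fin_cases i <;> fin_cases j <;> simp [pauli3, Matrix.mul_apply]

theorem pauli1_mul_pauli2 : pauli1 * pauli2 = -Complex.I • pauli3 := by
  ext i j
  fin_cases i <;> fin_cases j <;> simp [pauli1, pauli2, pauli3, Matrix.mul_apply]

theorem single_self_mem_span_one_pauli1 (a : Fin 2) :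
    single a a 1 ∈ Submodule.span ℂ {1, pauli1} := by
  have h1 : (1 : M₂) ∈ Submodule.span ℂ {1, pauli1} :=
    Submodule.subset_span (by simp)
  have hσ : pauli1 ∈ Submodule.span ℂ {1, pauli1} := Submodule.subset_span (by simp)
  fin_cases a
  · convert Submodule.smul_mem _ (2⁻¹ : ℂ) (add_mem h1 hσ) using 1
    ext i j; fin_cases i <;> fin_cases j <;> norm_num [pauli1]
  · convert Submodule.smul_mem _ (2⁻¹ : ℂ) (sub_mem h1 hσ) using 1
    ext i j; fin_cases i <;> fin_cases j <;> norm_num [pauli1]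

theorem single_mem_span_pauli (a b : Fin 2) :
    single a b 1 ∈ Submodule.span ℂ {1, pauli1, pauli2, pauli3} := by
  have hdiag (a : Fin 2) : single a a 1 ∈ Submodule.span ℂ {1, pauli1, pauli2, pauli3} :=
    Submodule.span_mono (by intro x; simp only [Set.mem_insert_iff, Set.mem_singleton_iff]; tauto)
      (single_self_mem_span_one_pauli1 a)
  have h2 : pauli2 ∈ Submodule.span ℂ {1, pauli1, pauli2, pauli3} :=
    Submodule.subset_span (by simp)
  have h3 : Complex.I • pauli3 ∈ Submodule.span ℂ {1, pauli1, pauli2, pauli3} :=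
    Submodule.smul_mem _ _ (Submodule.subset_span (by simp))
  fin_cases a <;> fin_cases b
  · exact hdiag 0
  · convert Submodule.smul_mem _ (2⁻¹ : ℂ) (sub_mem h2 h3) using 1
    ext i j; fin_cases i <;> fin_cases j <;> norm_num [pauli2, pauli3]
  · convert Submodule.smul_mem _ (2⁻¹ : ℂ) (add_mem h2 h3) using 1
    ext i j; fin_cases i <;> fin_cases j <;> norm_num [pauli2, pauli3]
  · exact hdiag 1

theorem pauli1_apply_of_ne {a b : Fin 2} (h : a ≠ b) : pauli1 a b = 0 := by
  fin_cases a <;> fin_cases b <;> simp_all [pauli1]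

section Kron

variable {n : ℕ}

theorem kron_mul (M N : Fin n → M₂) :
    kron M * kron N = kron (M * N) := by
  ext f g
  simp only [kron, mul_apply, of_apply, Pi.mul_apply, ← Finset.prod_mul_distrib]
  rw [Finset.prod_univ_sum (fun _ => Finset.univ) (fun i c => M i (f i) c * N i c (g i)),
    Fintype.piFinset_univ]

theorem kron_single (f g : Fin n → Fin 2) :
    kron (fun i => single (f i) (g i) 1) = single f g 1 := by
  ext f' g'
  simp only [kron, of_apply, single_apply, Finset.prod_boole, Finset.mem_univ, true_imp_iff,
    funext_iff, forall_and]

theorem kron_mulSingle_apply (l : Fin n) (P : M₂) (f g : Fin n → Fin 2) :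
    kron (Pi.mulSingle l P) f g = P (f l) (g l) * ∏ i ∈ Finset.univ.erase l, (1 : M₂) (f i) (g i) := by
  rw [kron, of_apply, ← Finset.mul_prod_erase _ _ (Finset.mem_univ l), Pi.mulSingle_eq_same]
  congr 1
  exact Finset.prod_congr rfl fun i hi => by rw [Pi.mulSingle_eq_of_ne (Finset.ne_of_mem_erase hi)]

theorem kron_one : kron (1 : Fin n → M₂) = 1 := by
  ext f g
  simp only [kron, of_apply, Pi.one_apply, one_apply, Finset.prod_boole, Finset.mem_univ, true_imp_iff,
    funext_iff]

def site (l : Fin n) : M₂ →ₗ[ℂ] Matrix (Fin n → Fin 2) (Fin n → Fin 2) ℂ where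
  toFun P := kron (Pi.mulSingle l P)
  map_add' P Q := by ext f g; simp [kron_mulSingle_apply, add_mul]
  map_smul' c P := by ext f g; simp [kron_mulSingle_apply, mul_assoc]

theorem site_apply (l : Fin n) (P : M₂) : site l P = kron (Pi.mulSingle l P) := rfl

theorem site_one (l : Fin n) : site l 1 = 1 := by
  rw [site_apply, Pi.mulSingle_one, kron_one]

theorem kron_mem_of_site_mem (B : Subalgebra ℂ (Matrix (Fin n → Fin 2) (Fin n → Fin 2) ℂ))
    (u : Fin n → M₂) (hu : ∀ i, site i (u i) ∈ B) : kron u ∈ B := by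
  suffices ∀ s : Finset (Fin n), kron (s.piecewise u 1) ∈ B by
    simpa using this Finset.univ
  intro s
  induction s using Finset.induction_on with
  | empty => rw [Finset.piecewise_empty, kron_one]; exact B.one_mem
  | insert a s ha ih =>
    have hsplit : (insert a s).piecewise u 1 = s.piecewise u 1 * Pi.mulSingle a (u a) := by
      funext i
      by_cases hi : i = a
      · subst hi; simp [ha]
      · simp [hi, Finset.piecewise]
    rw [hsplit, ← kron_mul]
    exact B.mul_mem ih (hu a)

end Kron

section SpinSystem

variable {n N : ℕ}

def pauli3String (l : Fin n) : Matrix (Fin n → Fin 2) (Fin n → Fin 2) ℂ :=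
  kron fun i => if i < l then pauli3 else 1

theorem spinS_mul_spinS (l : Fin n) (b c : Bool) :
    spinS n l b * spinS n l c =
      site l ((if b then pauli2 else pauli1) * (if c then pauli2 else pauli1)) := by
  rw [spinS, spinS, kron_mul, site_apply]
  congr 1
  funext i
  rcases lt_trichotomy i l with h | rfl | h
  · simp [h, h.ne, pauli3_mul_self]
  · simp
  · simp [h.ne', not_lt_of_gt h]

theorem pauli3String_mul_spinS (l : Fin n) (b : Bool) :
    pauli3String l * spinS n l b = site l (if b then pauli2 else pauli1) := by
  rw [pauli3String, spinS, kron_mul, site_apply]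
  congr 1
  funext i
  rcases lt_trichotomy i l with h | rfl | h
  · simp [h, h.ne, pauli3_mul_self]
  · simp
  · simp [h.ne', not_lt_of_gt h]

theorem one_mem_spinTRO : (1 : Matrix (Fin n → Fin 2) (Fin n → Fin 2) ℂ) ∈ spinTRO n N :=
  subset_troSpanA (Set.mem_insert _ _)

theorem spinS_mem_spinTRO {l : Fin n} {b : Bool} (h : 2 * (l : ℕ) + (if b then 2 else 1) ≤ N) :
    spinS n l b ∈ spinTRO n N :=
  subset_troSpanA (Set.mem_insert_of_mem _ ⟨(l, b), h, rfl⟩)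

theorem mul_mem_spinTRO {x z : Matrix (Fin n → Fin 2) (Fin n → Fin 2) ℂ}
    (hx : x ∈ spinTRO n N) (hz : z ∈ spinTRO n N) : x * z ∈ spinTRO n N :=
  mul_mem_troSpanA_of_one_mem one_mem_spinTRO hx hz

def spinSubalgebra (n N : ℕ) : Subalgebra ℂ (Matrix (Fin n → Fin 2) (Fin n → Fin 2) ℂ) :=
  (spinTRO n N).toSubalgebra one_mem_spinTRO fun _ _ => mul_mem_spinTRO

theorem site_pauli3_mem_spinTRO {l : Fin n} (h : 2 * (l : ℕ) + 2 ≤ N) :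
    site l pauli3 ∈ spinTRO n N := by
  have hprod : site l pauli3 = Complex.I • (spinS n l false * spinS n l true) := by
    simp [spinS_mul_spinS, pauli1_mul_pauli2, smul_smul]
  rw [hprod]
  exact Submodule.smul_mem _ _ (mul_mem_spinTRO
    (spinS_mem_spinTRO (b := false) (by simp; omega)) (spinS_mem_spinTRO (b := true) (by simpa)))

theorem pauli3String_mem_spinTRO {l : Fin n} (h : 2 * (l : ℕ) ≤ N) :
    pauli3String l ∈ spinTRO n N := by
  refine kron_mem_of_site_mem (spinSubalgebra n N) _ fun i => ?_
  split_ifs with hi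
  · exact site_pauli3_mem_spinTRO (by have : (i : ℕ) < l := hi; omega)
  · rw [site_one]; exact one_mem_spinTRO

theorem site_pauli_mem_spinTRO {l : Fin n} {b : Bool}
    (h : 2 * (l : ℕ) + (if b then 2 else 1) ≤ N) :
    site l (if b then pauli2 else pauli1) ∈ spinTRO n N := by
  rw [← pauli3String_mul_spinS]
  exact mul_mem_spinTRO (pauli3String_mem_spinTRO (by split_ifs at h <;> omega))
    (spinS_mem_spinTRO h)

theorem site_single_mem_spinTRO {l : Fin n} {a b : Fin 2}
    (h : 2 * (l : ℕ) + (if a = b then 1 else 2) ≤ N) :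
    site l (single a b 1) ∈ spinTRO n N := by
  have h1 : (1 : M₂) ∈ (spinTRO n N).comap (site l) := by
    rw [Submodule.mem_comap, site_one]; exact one_mem_spinTRO
  have hσ1 : pauli1 ∈ (spinTRO n N).comap (site l) :=
    site_pauli_mem_spinTRO (b := false) (by split_ifs at h <;> simp <;> omega)
  suffices single a b 1 ∈ (spinTRO n N).comap (site l) from this
  by_cases hab : a = b
  · subst hab
    refine Submodule.span_le.mpr ?_ (single_self_mem_span_one_pauli1 a)
    simp only [Set.insert_subset_iff, Set.singleton_subset_iff]
    exact ⟨h1, hσ1⟩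
  · rw [if_neg hab] at h
    have hσ2 : pauli2 ∈ (spinTRO n N).comap (site l) := site_pauli_mem_spinTRO (b := true) h
    refine Submodule.span_le.mpr ?_ (single_mem_span_pauli a b)
    simp only [Set.insert_subset_iff, Set.singleton_subset_iff]
    exact ⟨h1, hσ1, hσ2, site_pauli3_mem_spinTRO h⟩

theorem single_mem_spinTRO {f g : Fin n → Fin 2}
    (h : ∀ l : Fin n, 2 * (l : ℕ) + (if f l = g l then 1 else 2) ≤ N) :
    single f g 1 ∈ spinTRO n N := by
  rw [← kron_single]
  exact kron_mem_of_site_mem (spinSubalgebra n N) _ fun l => site_single_mem_spinTRO (h l)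

end SpinSystem

def tupleSnocEquiv (m : ℕ) : Fin (2 ^ m) × Fin 2 ≃ (Fin (m + 1) → Fin 2) :=
  (Equiv.prodComm _ _).trans
    (((Equiv.refl (Fin 2)).prodCongr finFunctionFinEquiv.symm).trans (Fin.snocEquiv fun _ => Fin 2))

theorem mem_range_blockDiagonalReindex_tupleSnocEquiv_iff {m : ℕ}
    {x : Matrix (Fin (m + 1) → Fin 2) (Fin (m + 1) → Fin 2) ℂ} :
    x ∈ LinearMap.range (blockDiagonalReindex (tupleSnocEquiv m)) ↔
      ∀ f g, f (Fin.last m) ≠ g (Fin.last m) → x f g = 0 :=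
  mem_range_blockDiagonalReindex_iff _

theorem spinS_apply_eq_zero {m : ℕ} {l : Fin (m + 1)} {b : Bool}
    (h : 2 * (l : ℕ) + (if b then 2 else 1) ≤ 2 * m + 1) {f g : Fin (m + 1) → Fin 2}
    (hfg : f (Fin.last m) ≠ g (Fin.last m)) : spinS (m + 1) l b f g = 0 := by
  refine Finset.prod_eq_zero (Finset.mem_univ (Fin.last m)) ?_
  simp only [if_neg (not_lt.mpr (Fin.le_last l))]
  split_ifs with hl hb
  · subst hl hb
    simp at h
  · exact pauli1_apply_of_ne hfg
  · exact one_apply_ne hfg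

theorem spinTRO_le_range (m : ℕ) :
    spinTRO (m + 1) (2 * m + 1) ≤ LinearMap.range (blockDiagonalReindex (tupleSnocEquiv m)) := by
  refine troSpanA_le ?_ ?_
  · rintro x (rfl | ⟨⟨l, b⟩, hlb, rfl⟩) <;>
      rw [SetLike.mem_coe, mem_range_blockDiagonalReindex_tupleSnocEquiv_iff]
    · exact fun f g hfg => one_apply_ne fun h => hfg (by rw [h])
    · exact fun f g hfg => spinS_apply_eq_zero hlb hfg
  · rintro _ ⟨x, rfl⟩ _ ⟨y, rfl⟩ _ ⟨z, rfl⟩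
    exact ⟨x * star y * z, blockDiagonalReindex_mul_star_mul _ x y z⟩

theorem range_le_spinTRO (m : ℕ) :
    LinearMap.range (blockDiagonalReindex (tupleSnocEquiv m)) ≤ spinTRO (m + 1) (2 * m + 1) := by
  intro x hx
  rw [mem_range_blockDiagonalReindex_tupleSnocEquiv_iff] at hx
  rw [matrix_eq_sum_single x]
  refine Submodule.sum_mem _ fun f _ => Submodule.sum_mem _ fun g _ => ?_
  by_cases hfg : f (Fin.last m) = g (Fin.last m)
  · have hsingle : single f g (x f g) = x f g • single f g 1 := by
      rw [smul_single, smul_eq_mul, mul_one]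
    rw [hsingle]
    refine Submodule.smul_mem _ _ (single_mem_spinTRO fun l => ?_)
    rcases (Fin.le_last l).lt_or_eq with hl | rfl
    · have : (l : ℕ) < m := hl
      split_ifs <;> omega
    · simp [hfg]
  · rw [hx f g hfg, single_zero]
    exact zero_mem _

/-- the TRO generated by the standard spin system `{1, s₁, …, s_{2n-1}}`
in `M_{2ⁿ}(ℂ)` is TRO-isomorphic to `M_{2^{n-1}}(ℂ) ⊕ M_{2^{n-1}}(ℂ)`. -/
theorem stmt_9 (n : ℕ) (hn : 1 ≤ n) :
    ∃ Φ : ↥(spinTRO n (2 * n - 1)) →ₗ[ℂ]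
        Matrix (Fin (2 ^ (n - 1))) (Fin (2 ^ (n - 1))) ℂ ×
        Matrix (Fin (2 ^ (n - 1))) (Fin (2 ^ (n - 1))) ℂ,
      Function.Bijective Φ ∧
      ∀ x y z w : ↥(spinTRO n (2 * n - 1)),
        (w : Matrix (Fin n → Fin 2) (Fin n → Fin 2) ℂ) =
          (x : Matrix (Fin n → Fin 2) (Fin n → Fin 2) ℂ) *
            star (y : Matrix (Fin n → Fin 2) (Fin n → Fin 2) ℂ) *
            (z : Matrix (Fin n → Fin 2) (Fin n → Fin 2) ℂ) →
        Φ w = Φ x * star (Φ y) * Φ z := by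
  obtain ⟨m, rfl⟩ : ∃ m, n = m + 1 := ⟨n - 1, by omega⟩
  rw [show 2 * (m + 1) - 1 = 2 * m + 1 by omega, Nat.add_sub_cancel]
  obtain ⟨Φ, hΦ, hΦt⟩ := exists_bijective_ternary_of_eq_range _
    (blockDiagonalReindex_injective (tupleSnocEquiv m)) (blockDiagonalReindex_mul_star_mul _)
    (le_antisymm (spinTRO_le_range m) (range_le_spinTRO m))
  refine ⟨(LinearEquiv.finTwoArrow ℂ _).toLinearMap ∘ₗ Φ,
    (LinearEquiv.finTwoArrow ℂ _).bijective.comp hΦ, fun x y z w hw => ?_⟩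
  simp only [LinearMap.comp_apply, LinearEquiv.coe_coe, hΦt x y z w hw]
  rfl
end
end

section
/- Let n, m ≥ 2 and let Z = M_{n,m}(ℂ) be the JC*-triple of complex n×m matrices with triple product {a,b,c} = (1/2)(a b* c + c b* a), and let (T, ρ) be a universal enveloping TRO of Z. Then T is TRO-isomorphic neither to M_{n,m}(ℂ) nor to M_{m,n}(ℂ): there is no complex-linear bijection Φ from T onto M_{n,m}(ℂ) (or onto M_{m,n}(ℂ)) satisfying Φ(x y* z) = Φ(x) Φ(y)* Φ(z). -/
noncomputable section

open Matrix

/-- The Jordan triple product on rectangular matrices. -/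
def jtpM {n m : ℕ} (a b c : Matrix (Fin n) (Fin m) ℂ) : Matrix (Fin n) (Fin m) ℂ :=
  (2⁻¹ : ℂ) • (a * bᴴ * c + c * bᴴ * a)

/-- A triple homomorphism from the JC*-triple `M_{n,m}(ℂ)` into a subspace `U ⊆ B(K)`. -/
def IsTripleHomMat {n m : ℕ} {K : HilbertC} (U : Submodule ℂ (BH K))
    (α : Matrix (Fin n) (Fin m) ℂ →L[ℂ] ↥U) : Prop :=
  ∀ a b c, ((α (jtpM a b c) : BH K)) = jtp ((α a : BH K)) ((α b : BH K)) ((α c : BH K))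

/-- `(T, ρ)` is a universal enveloping TRO of the JC*-triple `M_{n,m}(ℂ)`. -/
def IsUnivTROMat {n m : ℕ} {Hh : HilbertC} (T : Submodule ℂ (BH Hh))
    (ρ : Matrix (Fin n) (Fin m) ℂ →L[ℂ] ↥T) : Prop :=
  IsTROsub T ∧ IsTripleHomMat T ρ ∧
  troClosure (Set.range fun a => (ρ a : BH Hh)) = T ∧
  ∀ (K : HilbertC) (U : Submodule ℂ (BH K)), IsTROsub U →
    ∀ α : Matrix (Fin n) (Fin m) ℂ →L[ℂ] ↥U, IsTripleHomMat U α →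
      ∃ β : ↥T →L[ℂ] ↥U, IsTROHom T U β ∧ ∀ a, β (ρ a) = α a

/-!
If `T` were TRO-isomorphic to `M_{n,m}` or `M_{m,n}`, it would have dimension `nm`. The corner
embedding `x ↦ [[0, x], [0, 0]]` of `M_{n,m}` into `B(ℂ^{n+m})` factors through `ρ`, so `ρ` is
injective and, by a dimension count, onto. Then `ρ a (ρ b)* ρ c = ρ d` for some matrix `d`.
Pushing this identity along the TRO-homomorphisms extending the corner embedding and the
transposed corner embedding `x ↦ [[0, xᵀ], [0, 0]]` (a triple homomorphism because `{a, b, c}`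
is symmetric in `a` and `c`) gives `d = a b* c` and `d = c b* a`; for matrix units these differ
once `n ≥ 2`.
-/

namespace Matrix

variable {ι κ R : Type*} [Fintype ι] [Fintype κ]

theorem transpose_mul_conjTranspose_mul [CommSemiring R] [StarRing R] (a b c : Matrix ι κ R) :
    (a * bᴴ * c)ᵀ = cᵀ * bᵀᴴ * aᵀ := by
  simp only [transpose_mul, Matrix.mul_assoc]
  rfl

theorem exists_mul_conjTranspose_mul_ne [Semiring R] [StarRing R] [Nontrivial R] [DecidableEq ι]
    [DecidableEq κ] [Nontrivial ι] [Nonempty κ] :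
    ∃ a c : Matrix ι κ R, a * aᴴ * c ≠ c * aᴴ * a := by
  obtain ⟨i, i', hii'⟩ := exists_pair_ne ι
  obtain ⟨j⟩ := ‹Nonempty κ›
  refine ⟨single i j 1, single i' j 1, fun h => ?_⟩
  have := congrFun (congrFun h i') j
  simp [conjTranspose_single, hii'] at this

end Matrix

section Corner

variable (ι κ : Type) [Fintype ι] [Fintype κ] [DecidableEq ι] [DecidableEq κ]

abbrev cornerSpace : HilbertC := ⟨EuclideanSpace ℂ (ι ⊕ κ)⟩

def cornerEmbedding : Matrix ι κ ℂ →ₗ[ℂ] BH (cornerSpace ι κ) where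
  toFun x := toEuclideanCLM (𝕜 := ℂ) (fromBlocks 0 x 0 0)
  map_add' x y := by
    rw [← map_add, fromBlocks_add, add_zero, add_zero, add_zero]
  map_smul' c x := by
    rw [RingHom.id_apply, ← map_smul, fromBlocks_smul, smul_zero, smul_zero, smul_zero]

variable {ι κ}

theorem cornerEmbedding_injective : Function.Injective (cornerEmbedding ι κ) := fun _ _ h =>
  (fromBlocks_inj.mp ((toEuclideanCLM (𝕜 := ℂ)).injective h)).2.1

theorem cornerEmbedding_mul_star_mul (x y z : Matrix ι κ ℂ) :
    cornerEmbedding ι κ x * star (cornerEmbedding ι κ y) * cornerEmbedding ι κ z =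
      cornerEmbedding ι κ (x * yᴴ * z) := by
  simp [cornerEmbedding, ← map_star, ← map_mul, star_eq_conjTranspose, fromBlocks_conjTranspose,
    fromBlocks_multiply]

variable (ι κ)

def cornerTRO : Submodule ℂ (BH (cornerSpace ι κ)) := LinearMap.range (cornerEmbedding ι κ)

theorem isTROsub_cornerTRO : IsTROsub (cornerTRO ι κ) := by
  refine ⟨Submodule.closed_of_finiteDimensional _, ?_⟩
  rintro - ⟨x, rfl⟩ - ⟨y, rfl⟩ - ⟨z, rfl⟩
  exact ⟨x * yᴴ * z, (cornerEmbedding_mul_star_mul x y z).symm⟩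

def cornerMap : Matrix ι κ ℂ →L[ℂ] cornerTRO ι κ :=
  LinearMap.toContinuousLinearMap (cornerEmbedding ι κ).rangeRestrict

variable {ι κ}

@[simp]
theorem coe_cornerMap (x : Matrix ι κ ℂ) :
    (cornerMap ι κ x : BH (cornerSpace ι κ)) = cornerEmbedding ι κ x :=
  rfl

theorem cornerMap_injective : Function.Injective (cornerMap ι κ) := fun _ _ h =>
  cornerEmbedding_injective (congrArg Subtype.val h)

end Corner

section TripleHom

variable {n m : ℕ} {K : HilbertC} {U : Submodule ℂ (BH K)}

theorem isTripleHomMat_of_map_mul_star_mul (α : Matrix (Fin n) (Fin m) ℂ →L[ℂ] U)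
    (h : ∀ a b c, (α (a * bᴴ * c) : BH K) = α a * star (α b : BH K) * α c) :
    IsTripleHomMat U α := by
  intro a b c
  simp only [jtpM, jtp, map_smul, map_add, Submodule.coe_smul, Submodule.coe_add, h]

theorem isTripleHomMat_of_map_mul_star_mul_rev (α : Matrix (Fin n) (Fin m) ℂ →L[ℂ] U)
    (h : ∀ a b c, (α (a * bᴴ * c) : BH K) = α c * star (α b : BH K) * α a) :
    IsTripleHomMat U α := by
  intro a b c
  simp only [jtpM, jtp, map_smul, map_add, Submodule.coe_smul, Submodule.coe_add, h, add_comm]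

variable (n m)

theorem isTripleHomMat_cornerMap : IsTripleHomMat (cornerTRO (Fin n) (Fin m)) (cornerMap _ _) :=
  isTripleHomMat_of_map_mul_star_mul _ fun a b c => by
    simp only [coe_cornerMap, cornerEmbedding_mul_star_mul]

def transposeCornerMap : Matrix (Fin n) (Fin m) ℂ →L[ℂ] cornerTRO (Fin m) (Fin n) :=
  (cornerMap _ _).comp
    (LinearMap.toContinuousLinearMap (transposeLinearEquiv (Fin n) (Fin m) ℂ ℂ).toLinearMap)

@[simp]
theorem transposeCornerMap_apply (a : Matrix (Fin n) (Fin m) ℂ) :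
    transposeCornerMap n m a = cornerMap _ _ aᵀ :=
  rfl

theorem isTripleHomMat_transposeCornerMap :
    IsTripleHomMat (cornerTRO (Fin m) (Fin n)) (transposeCornerMap n m) :=
  isTripleHomMat_of_map_mul_star_mul_rev _ fun a b c => by
    simp only [transposeCornerMap_apply, coe_cornerMap, cornerEmbedding_mul_star_mul,
      transpose_mul_conjTranspose_mul]

end TripleHom

namespace IsUnivTROMat

variable {n m : ℕ} {Hh : HilbertC} {T : Submodule ℂ (BH Hh)}
  {ρ : Matrix (Fin n) (Fin m) ℂ →L[ℂ] T}

theorem map_eq_mul_star_mul (hUniv : IsUnivTROMat T ρ) {K : HilbertC}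
    {U : Submodule ℂ (BH K)} (hU : IsTROsub U) {α : Matrix (Fin n) (Fin m) ℂ →L[ℂ] U}
    (hα : IsTripleHomMat U α) {a b c d : Matrix (Fin n) (Fin m) ℂ}
    (hd : (ρ d : BH Hh) = ρ a * star (ρ b : BH Hh) * ρ c) :
    (α d : BH K) = α a * star (α b : BH K) * α c := by
  obtain ⟨β, hβ, hβρ⟩ := hUniv.2.2.2 K U hU α hα
  simpa only [hβρ] using hβ (ρ a) (ρ b) (ρ c) (ρ d) hd

theorem injective (hUniv : IsUnivTROMat T ρ) : Function.Injective ρ := by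
  obtain ⟨β, -, hβρ⟩ :=
    hUniv.2.2.2 _ _ (isTROsub_cornerTRO _ _) (cornerMap _ _) (isTripleHomMat_cornerMap n m)
  exact fun a b h => cornerMap_injective (by rw [← hβρ, ← hβρ, h])

theorem mul_conjTranspose_mul_comm_of_surjective (hUniv : IsUnivTROMat T ρ)
    (hρ : Function.Surjective ρ) (a b c : Matrix (Fin n) (Fin m) ℂ) :
    a * bᴴ * c = c * bᴴ * a := by
  obtain ⟨d, hd⟩ := hρ ⟨_, hUniv.1.2 _ (ρ a).2 _ (ρ b).2 _ (ρ c).2⟩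
  have hd' := congrArg Subtype.val hd
  have hcorner := hUniv.map_eq_mul_star_mul (isTROsub_cornerTRO _ _)
    (isTripleHomMat_cornerMap n m) hd'
  have htranspose := hUniv.map_eq_mul_star_mul (isTROsub_cornerTRO _ _)
    (isTripleHomMat_transposeCornerMap n m) hd'
  simp only [coe_cornerMap, transposeCornerMap_apply, cornerEmbedding_mul_star_mul,
    ← transpose_mul_conjTranspose_mul] at hcorner htranspose
  rw [← cornerEmbedding_injective hcorner,
    transpose_injective (cornerEmbedding_injective htranspose)]

theorem not_surjective (hUniv : IsUnivTROMat T ρ) (hn : 2 ≤ n) (hm : 0 < m) :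
    ¬ Function.Surjective ρ := fun hρ => by
  have : Nontrivial (Fin n) := Fin.nontrivial_iff_two_le.mpr hn
  have : Nonempty (Fin m) := ⟨⟨0, hm⟩⟩
  obtain ⟨a, c, hac⟩ := exists_mul_conjTranspose_mul_ne (R := ℂ) (ι := Fin n) (κ := Fin m)
  exact hac (hUniv.mul_conjTranspose_mul_comm_of_surjective hρ a a c)

theorem finrank_ne [FiniteDimensional ℂ T] (hUniv : IsUnivTROMat T ρ) (hn : 2 ≤ n)
    (hm : 0 < m) : Module.finrank ℂ T ≠ n * m := fun hdim => by
  have hdim' : Module.finrank ℂ (Matrix (Fin n) (Fin m) ℂ) = Module.finrank ℂ T := by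
    simp [hdim, Module.finrank_matrix]
  exact hUniv.not_surjective hn hm
    ((LinearMap.injective_iff_surjective_of_finrank_eq_finrank hdim').mp hUniv.injective)

end IsUnivTROMat

/-- for `n, m ≥ 2`, the universal enveloping TRO of `M_{n,m}(ℂ)` is
TRO-isomorphic neither to `M_{n,m}(ℂ)` nor to `M_{m,n}(ℂ)`. -/
theorem stmt_14 (n m : ℕ) (hn : 2 ≤ n) (hm : 2 ≤ m) (Hh : HilbertC)
    (T : Submodule ℂ (BH Hh)) (ρ : Matrix (Fin n) (Fin m) ℂ →L[ℂ] ↥T)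
    (hUniv : IsUnivTROMat T ρ) :
    (¬ ∃ Φ : ↥T →ₗ[ℂ] Matrix (Fin n) (Fin m) ℂ, Function.Bijective Φ ∧
        ∀ x y z w : ↥T, (w : BH Hh) = (x : BH Hh) * star (y : BH Hh) * (z : BH Hh) →
          Φ w = Φ x * (Φ y)ᴴ * Φ z) ∧
    (¬ ∃ Φ : ↥T →ₗ[ℂ] Matrix (Fin m) (Fin n) ℂ, Function.Bijective Φ ∧
        ∀ x y z w : ↥T, (w : BH Hh) = (x : BH Hh) * star (y : BH Hh) * (z : BH Hh) →
          Φ w = Φ x * (Φ y)ᴴ * Φ z) := by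
  constructor
  all_goals
    rintro ⟨Φ, hΦ, -⟩
    let e := LinearEquiv.ofBijective Φ hΦ
    have : FiniteDimensional ℂ T := e.symm.finiteDimensional
    refine hUniv.finrank_ne hn (by omega) ?_
    simp [e.finrank_eq, Module.finrank_matrix, mul_comm]
end
end

section
/- Let n, m ≥ 2, let Z = M_{n,m}(ℂ) be the JC*-triple of complex n×m matrices with triple product {a,b,c} = (1/2)(a b* c + c b* a), and let (T, ρ) be a universal enveloping TRO of Z. Then the complex dimension of T is at most 2nm. -/
noncomputable section

open Matrix

/-!
Write `V i j := ρ (E i j)` for the images of the matrix units. For `k ≠ i` and `l ≠ j` the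
monomial `A i j := V i l (V k l)* V k j` does not depend on `(k, l)`, and `V = A + B` where `B`
is the same construction for the transposed family. The
`A i j` multiply like the matrix units of `M_{n,m}` (`A A* A = δ δ A`), the `B i j` like those
of the transpose, and the two families are orthogonal (`A B* = 0`, `A* B = 0`). Hence the span
of the `2nm` elements `A i j`, `B i j` is a finite-dimensional, hence closed, TRO containing
`ρ(Z)`, so it contains `T`.
-/

open Function Matrix Submodule Set Cardinal

theorem eq_of_add_self_eq_add_self {M : Type*} [AddMonoid M] [IsAddTorsionFree M] {x y : M}
    (h : x + x = y + y) : x = y :=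
  nsmul_right_injective two_ne_zero (by simpa only [two_nsmul] using h)

theorem IsIdempotentElem.mul_eq_zero_of_mul_add_mul_eq_zero {R : Type*} [NonUnitalRing R]
    [IsAddTorsionFree R] {p q w : R} (hp : IsIdempotentElem p) (hq : IsIdempotentElem q)
    (h : p * w + w * q = 0) : p * w = 0 ∧ w * q = 0 := by
  have hl : p * w + p * w * q = 0 := by
    simpa only [mul_add, ← mul_assoc, hp.eq, mul_zero] using congrArg (p * ·) h
  have hr : p * w * q + w * q = 0 := by
    simpa only [add_mul, mul_assoc, hq.eq, zero_mul] using congrArg (· * q) h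
  have hpw : p * w = w * q :=
    (eq_neg_of_add_eq_zero_left hl).trans (eq_neg_of_add_eq_zero_right hr).symm
  have hpw0 : p * w = 0 := eq_of_add_self_eq_add_self (by rw [add_zero]; nth_rw 2 [hpw]; exact h)
  exact ⟨hpw0, hpw ▸ hpw0⟩

theorem Submodule.mul_star_mul_mem_span {R A : Type*} [CommSemiring R] [StarRing R]
    [NonUnitalSemiring A] [StarRing A] [Module R A] [StarModule R A] [IsScalarTower R A A]
    [SMulCommClass R A A] {S : Set A}
    (hS : ∀ x ∈ S, ∀ y ∈ S, ∀ z ∈ S, x * star y * z ∈ span R S) {x y z : A}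
    (hx : x ∈ span R S) (hy : y ∈ span R S) (hz : z ∈ span R S) :
    x * star y * z ∈ span R S := by
  induction hx, hz using span_induction₂ with
  | mem_mem x z hx hz =>
    induction hy using span_induction with
    | mem y hy => exact hS x hx y hy z hz
    | zero => simp
    | add y y' _ _ h h' => simpa only [star_add, mul_add, add_mul] using add_mem h h'
    | smul r y _ h => simpa only [star_smul, mul_smul_comm, smul_mul_assoc] using smul_mem _ _ h
  | zero_left => simp
  | zero_right => simp
  | add_left x x' z _ _ _ h h' => simpa only [add_mul] using add_mem h h'
  | add_right x z z' _ _ _ h h' => simpa only [mul_add] using add_mem h h'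
  | smul_left r x z _ _ h => simpa only [smul_mul_assoc] using smul_mem _ r h
  | smul_right r x z _ _ h => simpa only [mul_smul_comm] using smul_mem _ r h

theorem Matrix.single_mul_conjTranspose_single_mul_single {ι κ α : Type*} [Fintype ι]
    [Fintype κ] [DecidableEq ι] [DecidableEq κ] [Semiring α] [StarRing α] (i k p : ι)
    (j l q : κ) :
    single i j (1 : α) * (single k l (1 : α))ᴴ * single p q (1 : α) =
      if j = l ∧ k = p then single i q 1 else 0 := by
  by_cases hjl : j = l <;> by_cases hkp : k = p <;> simp [hjl, hkp]

theorem Matrix.apply_mem_span_single {R ι κ M : Type*} [Semiring R] [Fintype ι] [Fintype κ]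
    [DecidableEq ι] [DecidableEq κ] [AddCommMonoid M] [Module R M]
    (f : Matrix ι κ R →ₗ[R] M) (a : Matrix ι κ R) :
    f a ∈ span R (range fun p : ι × κ => f (single p.1 p.2 1)) := by
  have := apply_mem_span_image_of_mem_span f ((Matrix.stdBasis R ι κ).mem_span a)
  simpa only [← Set.range_comp, comp_def, ← stdBasis_eq_single] using this

def other {α : Type*} [Nontrivial α] (a : α) : α :=
  (exists_ne a).choose

theorem other_ne {α : Type*} [Nontrivial α] (a : α) : other a ≠ a :=
  (exists_ne a).choose_spec

section JordanMatrixUnits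

variable {A : Type*} [NonUnitalCStarAlgebra A] {ι κ : Type*}

/-- The relations `2 {E i j, E k l, E p q} = δ_jl δ_kp E i q + δ_ql δ_ki E p j` satisfied by
the matrix units under the Jordan triple product. -/
def IsJordanMatrixUnits [DecidableEq ι] [DecidableEq κ] (V : ι → κ → A) : Prop :=
  ∀ (i k p : ι) (j l q : κ), V i j * star (V k l) * V p q + V p q * star (V k l) * V i j =
    (if j = l ∧ k = p then V i q else 0) + (if q = l ∧ k = i then V p j else 0)

def corner (V : ι → κ → A) (i : ι) (j : κ) (k : ι) (l : κ) : A :=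
  V i l * star (V k l) * V k j

namespace IsJordanMatrixUnits

variable [DecidableEq ι] [DecidableEq κ] {V : ι → κ → A}

theorem swap (hV : IsJordanMatrixUnits V) : IsJordanMatrixUnits (swap V) := by
  intro j l q i k p
  rw [add_comm (ite _ _ _)]
  convert hV i k p j l q using 3 <;> simp only [eq_comm, and_comm]

theorem mul_star_mul_self (hV : IsJordanMatrixUnits V) (i : ι) (j : κ) :
    V i j * star (V i j) * V i j = V i j := by
  have := IsAddTorsionFree.of_isTorsionFree ℂ A
  have h := hV i i i j j j
  simp only [and_self, if_true] at h
  exact eq_of_add_self_eq_add_self h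

theorem mul_star_mul_self_mul (hV : IsJordanMatrixUnits V) (i : ι) (j : κ) (t : A) :
    V i j * (star (V i j) * (V i j * t)) = V i j * t := by
  rw [← mul_assoc, ← mul_assoc, hV.mul_star_mul_self]

theorem mul_star_mul_eq_zero (hV : IsJordanMatrixUnits V) {i k : ι} {j l : κ} (hik : i ≠ k)
    (hjl : j ≠ l) : V i j * star (V i j) * V k l = 0 ∧ V k l * star (V i j) * V i j = 0 := by
  have := IsAddTorsionFree.of_isTorsionFree ℂ A
  have hp : IsIdempotentElem (V i j * star (V i j)) := by
    rw [IsIdempotentElem, ← mul_assoc, hV.mul_star_mul_self]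
  have hq : IsIdempotentElem (star (V i j) * V i j) := by
    simpa only [IsIdempotentElem, mul_assoc] using
      congrArg (star (V i j) * ·) (hV.mul_star_mul_self i j)
  have h := hV i i k j j l
  rw [if_neg (fun h => hik h.2), if_neg (fun h => hjl h.1.symm), add_zero] at h
  rw [mul_assoc (V k l)]
  exact hp.mul_eq_zero_of_mul_add_mul_eq_zero hq (by rwa [← mul_assoc (V k l)])

theorem mul_star_eq_zero (hV : IsJordanMatrixUnits V) {i k : ι} {j l : κ} (hik : i ≠ k)
    (hjl : j ≠ l) : V i j * star (V k l) = 0 := by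
  rw [← CStarRing.mul_star_self_eq_zero_iff, star_mul, star_star, ← mul_assoc,
    (hV.mul_star_mul_eq_zero hik.symm hjl.symm).2, zero_mul]

theorem star_mul_eq_zero (hV : IsJordanMatrixUnits V) {i k : ι} {j l : κ} (hik : i ≠ k)
    (hjl : j ≠ l) : star (V k l) * V i j = 0 := by
  rw [← CStarRing.mul_star_self_eq_zero_iff, star_mul, star_star, mul_assoc,
    ← mul_assoc (V i j), (hV.mul_star_mul_eq_zero hik hjl).1, mul_zero]

/- `V i j` and `V k l` are orthogonal, so expanding one factor by `hil` or `hkj` leaves a single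
term each time. -/
theorem corner_eq_corner_col (hV : IsJordanMatrixUnits V) {i k : ι} {j l : κ} (hk : k ≠ i)
    (hl : l ≠ j) : corner V i j k l = corner V i j k j := by
  have hil : V i j * star (V k j) * V k l + V k l * star (V k j) * V i j = V i l := by
    simpa [hk, hl] using hV i k k j j l
  have hkj : V i j * star (V i l) * V k l + V k l * star (V i l) * V i j = V k j := by
    simpa [hl.symm] using hV i i k j l l
  replace hkj := congrArg star hkj
  simp only [star_add, star_mul, star_star, mul_assoc] at hkj
  have horth (t : A) : V i j * (star (V k l) * t) = 0 := by
    rw [← mul_assoc, hV.mul_star_eq_zero hk.symm hl.symm, zero_mul]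
  have horth' (t : A) : star (V i j) * (V k l * t) = 0 := by
    rw [← mul_assoc, hV.star_mul_eq_zero hk hl, zero_mul]
  have hproj : V i j * star (V i j) * V i l = V i j * star (V k j) * V k l := by
    rw [← hil]
    simp only [mul_add, mul_assoc, horth', hV.mul_star_mul_self_mul, mul_zero, add_zero]
  symm
  calc corner V i j k j
    _ = V i j * star (V i j) * V i l * star (V k l) * V k j := by
      rw [corner, ← hkj]
      simp only [mul_add, mul_assoc, horth, zero_add]
    _ = V i j * star (V k j) * V k l * star (V k l) * V k j := by rw [hproj]
    _ = corner V i j k l := by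
      rw [corner, ← hil]
      simp only [add_mul, mul_assoc, horth, mul_zero, add_zero]

theorem corner_eq_corner_row (hV : IsJordanMatrixUnits V) {i k : ι} {j l : κ} (hk : k ≠ i)
    (hl : l ≠ j) : corner V i j k l = corner V i j i l := by
  have hil : V i j * star (V k j) * V k l + V k l * star (V k j) * V i j = V i l := by
    simpa [hk, hl] using hV i k k j j l
  replace hil := congrArg star hil
  simp only [star_add, star_mul, star_star, mul_assoc] at hil
  have hkj : V i j * star (V i l) * V k l + V k l * star (V i l) * V i j = V k j := by
    simpa [hl.symm] using hV i i k j l l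
  have horth' (t : A) : star (V k l) * (V i j * t) = 0 := by
    rw [← mul_assoc, hV.star_mul_eq_zero hk.symm hl.symm, zero_mul]
  have hv : V i j * (star (V i j) * V i j) = V i j := by rw [← mul_assoc, hV.mul_star_mul_self]
  have hexpand : corner V i j k l = V i l * star (V k l) * V k l * star (V i l) * V i j := by
    rw [corner, ← hkj]
    simp only [mul_add, mul_assoc, horth', mul_zero, zero_add]
  calc corner V i j k l
    _ = V i l * star (V k l) * V k l * star (V i l) * V i j * star (V i j) * V i j := by
      simp only [hexpand, mul_assoc, hv]
    _ = corner V i j k l * star (V i j) * V i j := by rw [hexpand]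
    _ = corner V i j i l := by
      rw [corner, corner, ← hil]
      simp only [mul_add, add_mul, mul_assoc, hV.star_mul_eq_zero hk.symm hl.symm, mul_zero,
        add_zero]

end IsJordanMatrixUnits

variable [Nontrivial ι] [Nontrivial κ]

def leftPart (V : ι → κ → A) (i : ι) (j : κ) : A :=
  corner V i j (other i) (other j)

def rightPart (V : ι → κ → A) (i : ι) (j : κ) : A :=
  leftPart (swap V) j i

def leftRightParts (V : ι → κ → A) : (ι × κ) ⊕ (ι × κ) → A :=
  Sum.elim (uncurry (leftPart V)) (uncurry (rightPart V))

theorem rank_span_range_leftRightParts_le [Fintype ι] [Fintype κ] (V : ι → κ → A) :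
    Module.rank ℂ (span ℂ (range (leftRightParts V))) ≤
      (2 * Fintype.card ι * Fintype.card κ : ℕ) := by
  classical
  calc Module.rank ℂ (span ℂ (range (leftRightParts V)))
    _ ≤ #(range (leftRightParts V)) := rank_span_le _
    _ = Fintype.card (range (leftRightParts V)) := Cardinal.mk_fintype _
    _ ≤ Fintype.card ((ι × κ) ⊕ (ι × κ)) := Nat.cast_le.mpr (Fintype.card_range_le _)
    _ = (2 * Fintype.card ι * Fintype.card κ : ℕ) := by
      rw [Fintype.card_sum, Fintype.card_prod, two_mul, add_mul]

namespace IsJordanMatrixUnits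

variable [DecidableEq ι] [DecidableEq κ] {V : ι → κ → A}

theorem leftPart_eq (hV : IsJordanMatrixUnits V) {i k : ι} {j l : κ} (h : k ≠ i ∨ l ≠ j) :
    leftPart V i j = corner V i j k l := by
  have key {k : ι} {l : κ} (hk : k ≠ i) (hl : l ≠ j) : corner V i j k l = leftPart V i j := by
    rw [hV.corner_eq_corner_row hk hl, ← hV.corner_eq_corner_row (other_ne i) hl,
      hV.corner_eq_corner_col (other_ne i) hl,
      ← hV.corner_eq_corner_col (other_ne i) (other_ne j), leftPart]
  rcases eq_or_ne k i with rfl | hk <;> rcases eq_or_ne l j with rfl | hl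
  · simp at h
  · rw [← hV.corner_eq_corner_row (other_ne k) hl, key (other_ne k) hl]
  · rw [← hV.corner_eq_corner_col hk (other_ne l), key hk (other_ne l)]
  · exact (key hk hl).symm

theorem rightPart_eq (hV : IsJordanMatrixUnits V) {i k : ι} {j l : κ} (h : k ≠ i ∨ l ≠ j) :
    rightPart V i j = V k j * star (V k l) * V i l :=
  hV.swap.leftPart_eq h.symm

theorem leftPart_add_rightPart (hV : IsJordanMatrixUnits V) (i : ι) (j : κ) :
    leftPart V i j + rightPart V i j = V i j := by
  have h := hV i i i (other j) (other j) j
  rw [hV.leftPart_eq (Or.inr (other_ne j)) (k := i), corner,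
    hV.rightPart_eq (Or.inr (other_ne j)) (k := i)]
  simpa [other_ne, (other_ne j).symm] using h

theorem leftPart_mul_star_eq_zero (hV : IsJordanMatrixUnits V) {j l : κ} (hjl : j ≠ l)
    (i k : ι) : leftPart V i j * star (V k l) = 0 := by
  rw [hV.leftPart_eq (Or.inr (other_ne j)) (k := other k), corner, mul_assoc,
    hV.mul_star_eq_zero (other_ne k) hjl, mul_zero]

theorem rightPart_mul_star_eq_zero (hV : IsJordanMatrixUnits V) {i k : ι} (hik : i ≠ k)
    (j l : κ) : rightPart V i j * star (V k l) = 0 :=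
  hV.swap.leftPart_mul_star_eq_zero hik j l

theorem star_leftPart_mul_eq_zero (hV : IsJordanMatrixUnits V) {i k : ι} (hik : i ≠ k)
    (j l : κ) : star (leftPart V i j) * V k l = 0 := by
  rw [hV.leftPart_eq (Or.inl (other_ne i)) (l := other l), corner]
  simp only [star_mul, star_star, mul_assoc, hV.star_mul_eq_zero hik.symm (other_ne l).symm,
    mul_zero]

theorem star_rightPart_mul_eq_zero (hV : IsJordanMatrixUnits V) {j l : κ} (hjl : j ≠ l)
    (i k : ι) : star (rightPart V i j) * V k l = 0 :=
  hV.swap.star_leftPart_mul_eq_zero hjl i k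

theorem rightPart_mul_star_leftPart (hV : IsJordanMatrixUnits V) (i k : ι) (j l : κ) :
    rightPart V i j * star (leftPart V k l) = 0 := by
  rw [hV.leftPart_eq (Or.inr (other_ne l)) (k := other i), corner]
  simp only [star_mul, star_star, ← mul_assoc, hV.rightPart_mul_star_eq_zero (other_ne i).symm,
    zero_mul]

theorem star_rightPart_mul_leftPart (hV : IsJordanMatrixUnits V) (i k : ι) (j l : κ) :
    star (rightPart V i j) * leftPart V k l = 0 := by
  rw [hV.leftPart_eq (Or.inl (other_ne k)) (l := other j), corner]
  simp only [← mul_assoc, hV.star_rightPart_mul_eq_zero (other_ne j).symm, zero_mul]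

theorem leftPart_mul_star_rightPart (hV : IsJordanMatrixUnits V) (i k : ι) (j l : κ) :
    leftPart V i j * star (rightPart V k l) = 0 := by
  simpa using congrArg star (hV.rightPart_mul_star_leftPart k i l j)

theorem star_leftPart_mul_rightPart (hV : IsJordanMatrixUnits V) (i k : ι) (j l : κ) :
    star (leftPart V i j) * rightPart V k l = 0 := by
  simpa using congrArg star (hV.star_rightPart_mul_leftPart k i l j)

theorem leftPart_mul_star_leftPart_mul_leftPart (hV : IsJordanMatrixUnits V) (i k p : ι)
    (j l q : κ) :
    leftPart V i j * star (leftPart V k l) * leftPart V p q =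
      leftPart V i j * star (V k l) * V p q := by
  rw [← hV.leftPart_add_rightPart k l, ← hV.leftPart_add_rightPart p q, star_add,
    mul_add (leftPart V i j), hV.leftPart_mul_star_rightPart, add_zero, mul_add,
    mul_assoc _ _ (rightPart V p q), hV.star_leftPart_mul_rightPart, mul_zero, add_zero]

theorem leftPart_mul_star_mul_self (hV : IsJordanMatrixUnits V) (i : ι) (j : κ) :
    leftPart V i j * star (leftPart V i j) * leftPart V i j = leftPart V i j := by
  rw [hV.leftPart_mul_star_leftPart_mul_leftPart, hV.leftPart_eq (Or.inr (other_ne j)) (k := i),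
    corner]
  simp only [mul_assoc]
  rw [← mul_assoc (V i j), hV.mul_star_mul_self]

theorem leftPart_mul_star_mul_of_ne (hV : IsJordanMatrixUnits V) {i k : ι} (hk : k ≠ i)
    (j q : κ) : leftPart V i j * star (leftPart V k j) * leftPart V k q = leftPart V i q := by
  rw [hV.leftPart_mul_star_leftPart_mul_leftPart, eq_sub_of_add_eq (hV.leftPart_add_rightPart i j),
    sub_mul, hV.rightPart_mul_star_eq_zero hk.symm, sub_zero, hV.leftPart_eq (Or.inl hk) (l := j),
    corner]

theorem leftPart_mul_star_mul (hV : IsJordanMatrixUnits V) (i k p : ι) (j l q : κ) :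
    leftPart V i j * star (leftPart V k l) * leftPart V p q =
      if j = l ∧ k = p then leftPart V i q else 0 := by
  obtain rfl | hjl := eq_or_ne j l
  · obtain rfl | hkp := eq_or_ne k p
    · rw [if_pos ⟨rfl, rfl⟩]
      obtain rfl | hki := eq_or_ne k i
      · rw [← hV.leftPart_mul_star_mul_of_ne (other_ne k) j q]
        simp only [← mul_assoc]
        rw [hV.leftPart_mul_star_mul_self]
      · exact hV.leftPart_mul_star_mul_of_ne hki j q
    · rw [if_neg (hkp ∘ And.right), hV.leftPart_eq (Or.inl (other_ne p)) (i := p) (l := q),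
        corner, ← mul_assoc, ← mul_assoc, mul_assoc _ _ (V p q),
        hV.star_leftPart_mul_eq_zero hkp, mul_zero, zero_mul, zero_mul]
  · rw [if_neg (hjl ∘ And.left), hV.leftPart_mul_star_leftPart_mul_leftPart,
      hV.leftPart_mul_star_eq_zero hjl, zero_mul]

theorem rightPart_mul_star_mul (hV : IsJordanMatrixUnits V) (i k p : ι) (j l q : κ) :
    rightPart V i j * star (rightPart V k l) * rightPart V p q =
      if i = k ∧ l = q then rightPart V p j else 0 :=
  hV.swap.leftPart_mul_star_mul j l q i k p

theorem mem_span_leftRightParts (hV : IsJordanMatrixUnits V) (i : ι) (j : κ) :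
    V i j ∈ span ℂ (range (leftRightParts V)) :=
  hV.leftPart_add_rightPart i j ▸
    add_mem (subset_span ⟨.inl (i, j), rfl⟩) (subset_span ⟨.inr (i, j), rfl⟩)

theorem mul_star_mul_mem_span_leftRightParts (hV : IsJordanMatrixUnits V) {x y z : A}
    (hx : x ∈ span ℂ (range (leftRightParts V)))
    (hy : y ∈ span ℂ (range (leftRightParts V)))
    (hz : z ∈ span ℂ (range (leftRightParts V))) :
    x * star y * z ∈ span ℂ (range (leftRightParts V)) := by
  refine mul_star_mul_mem_span ?_ hx hy hz
  rintro _ ⟨⟨i, j⟩ | ⟨i, j⟩, rfl⟩ _ ⟨⟨k, l⟩ | ⟨k, l⟩, rfl⟩ _ ⟨⟨p, q⟩ | ⟨p, q⟩, rfl⟩ <;>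
    simp only [leftRightParts, Sum.elim_inl, Sum.elim_inr, uncurry_apply_pair,
      hV.leftPart_mul_star_rightPart, hV.rightPart_mul_star_leftPart, zero_mul, zero_mem]
  · rw [hV.leftPart_mul_star_mul]
    split_ifs
    exacts [subset_span ⟨.inl (i, q), rfl⟩, zero_mem _]
  · rw [mul_assoc, hV.star_leftPart_mul_rightPart, mul_zero]
    exact zero_mem _
  · rw [mul_assoc, hV.star_rightPart_mul_leftPart, mul_zero]
    exact zero_mem _
  · rw [hV.rightPart_mul_star_mul]
    split_ifs
    exacts [subset_span ⟨.inr (p, j), rfl⟩, zero_mem _]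

end IsJordanMatrixUnits

end JordanMatrixUnits

theorem isJordanMatrixUnits_of_isTripleHomMat {n m : ℕ} {K : HilbertC} {U : Submodule ℂ (BH K)}
    {α : Matrix (Fin n) (Fin m) ℂ →L[ℂ] U} (hα : IsTripleHomMat U α) :
    IsJordanMatrixUnits fun i j => (α (single i j 1) : BH K) := by
  intro i k p j l q
  have h := hα (single i j 1) (single k l 1) (single p q 1)
  rw [jtpM, single_mul_conjTranspose_single_mul_single,
    single_mul_conjTranspose_single_mul_single, map_smul, map_add, apply_ite α, apply_ite α,
    map_zero, jtp] at h
  simp only [coe_smul, coe_add, apply_ite ((↑) : U → BH K), ZeroMemClass.coe_zero] at h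
  exact smul_right_injective _ (by norm_num) h.symm

theorem troClosure_range_le_span_leftRightParts {n m : ℕ} [Nontrivial (Fin n)]
    [Nontrivial (Fin m)] {K : HilbertC} {U : Submodule ℂ (BH K)}
    {α : Matrix (Fin n) (Fin m) ℂ →L[ℂ] U} (hα : IsTripleHomMat U α) :
    troClosure (range fun a => (α a : BH K)) ≤
      span ℂ (range (leftRightParts fun i j => (α (single i j 1) : BH K))) := by
  have hV := isJordanMatrixUnits_of_isTripleHomMat hα
  set W := span ℂ (range (leftRightParts fun i j => (α (single i j 1) : BH K)))
  have : FiniteDimensional ℂ W := FiniteDimensional.span_of_finite ℂ (finite_range _)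
  have hαW : span ℂ (range fun p : Fin n × Fin m => (α (single p.1 p.2 1) : BH K)) ≤ W :=
    span_le.mpr (range_subset_iff.mpr fun p => hV.mem_span_leftRightParts p.1 p.2)
  refine sInf_le ⟨W.closed_of_finiteDimensional, ?_, fun x hx y hy z hz =>
    hV.mul_star_mul_mem_span_leftRightParts hx hy hz⟩
  rintro _ ⟨a, rfl⟩
  exact hαW (apply_mem_span_single (U.subtype ∘ₗ α.toLinearMap) a)

/-- for `n, m ≥ 2`, the universal enveloping TRO of `M_{n,m}(ℂ)` has
dimension at most `2nm`. -/
theorem stmt_15 (n m : ℕ) (hn : 2 ≤ n) (hm : 2 ≤ m) (Hh : HilbertC)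
    (T : Submodule ℂ (BH Hh)) (ρ : Matrix (Fin n) (Fin m) ℂ →L[ℂ] ↥T)
    (hUniv : IsUnivTROMat T ρ) :
    Module.rank ℂ ↥T ≤ ((2 * n * m : ℕ) : Cardinal) := by
  have := Fin.nontrivial_iff_two_le.mpr hn
  have := Fin.nontrivial_iff_two_le.mpr hm
  obtain ⟨-, hρ, hT, -⟩ := hUniv
  calc Module.rank ℂ T
    _ = Module.rank ℂ (troClosure (range fun a => (ρ a : BH Hh))) := by rw [hT]
    _ ≤ _ := rank_mono (troClosure_range_le_span_leftRightParts hρ)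
    _ ≤ _ := by
      simpa using rank_span_range_leftRightParts_le fun i j => (ρ (single i j 1) : BH Hh)
end
end

section
/- Let Z ⊆ B(H₀) be a JC*-triple spanned by a linearly independent rectangular grid of rank 1 consisting of n tripotents u₁, …, u_n, and let (T, ρ) be a universal enveloping TRO of Z. Then the complex dimension of T is at most ∑_{k=1}^{n} C(n, k−1)·C(n, k), where C(n,k) denotes the binomial coefficient. -/
noncomputable section

open Matrix

/-- The multiplication table of a rectangular grid of rank 1 (axioms (RG'1)-(RG'3)):
`{u_i,u_i,u_i} = u_i`, `{u_i,u_i,u_k} = (1/2) u_k` for `i ≠ k` (and its outer-symmetric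
version), and all other triple products of grid elements are `0`. -/
def rgVal {A : Type*} [AddCommGroup A] [Module ℂ A] {n : ℕ}
    (u : Fin n → A) (i j k : Fin n) : A :=
  if i = j then (if j = k then u k else (2⁻¹ : ℂ) • u k)
  else if j = k then (2⁻¹ : ℂ) • u i
  else 0

/-- `Z` is linearly spanned by the linearly independent rank-1 rectangular grid
`u₁, …, u_n`. -/
def IsRank1Grid {H : HilbertC} {n : ℕ} (Z : Submodule ℂ (BH H)) (u : Fin n → BH H) : Prop :=
  LinearIndependent ℂ u ∧ Z = Submodule.span ℂ (Set.range u) ∧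
  ∀ i j k, jtp (u i) (u j) (u k) = rgVal u i j k

/-!
The images `v i = ρ(u i)` again satisfy the grid relations, so the TRO they generate is
spanned by the odd alternating words `v a₁ (v a₂)* v a₃ ⋯ v a₂ₖ₊₁`. Adding the relation for
`{v a, v c, v d}` to its outer reversal shows that `v a (v c)* v d + v d (v c)* v a` is a
combination of single letters, and the same holds with all stars exchanged. Hence inside any
word a block `a c d` with `d < a` may be replaced by `d c a` modulo shorter words, and a block
`a c a` is itself a combination of shorter words. Iterating, every odd word reduces to words in
which the unstarred indices and the starred indices both increase strictly. Such a word is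
determined by its two index sets, of sizes `k` and `k - 1`, so these words span a
finite-dimensional, hence closed, subspace; it is closed under `x y* z` and therefore
contains `T`.
-/

namespace RankOneGrid

open Submodule

section Words

variable {B : Type*} [Ring B] [StarRing B] {n : ℕ}

def letter (v : Fin n → B) (b : Bool) (i : Fin n) : B := bif b then star (v i) else v i

def altWord (v : Fin n → B) : Bool → List (Fin n) → B
  | _, [] => 1
  | b, a :: t => letter v b a * altWord v (!b) t

variable (v : Fin n → B)

@[simp] lemma altWord_nil (b : Bool) : altWord v b [] = 1 := rfl

@[simp] lemma altWord_cons (b : Bool) (a : Fin n) (t : List (Fin n)) :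
    altWord v b (a :: t) = letter v b a * altWord v (!b) t := rfl

lemma altWord_singleton (b : Bool) (a : Fin n) : altWord v b [a] = letter v b a := mul_one _

lemma altWord_append (b : Bool) (x y : List (Fin n)) :
    altWord v b (x ++ y) = altWord v b x * altWord v (b ^^ x.length.bodd) y := by
  induction x generalizing b with
  | nil => simp
  | cons a t ih => simp [ih, mul_assoc, Nat.bodd_succ]

lemma altWord_splice (b : Bool) (x m z : List (Fin n)) :
    altWord v b (x ++ m ++ z) = altWord v b x * altWord v (b ^^ x.length.bodd) m *
      altWord v (b ^^ x.length.bodd ^^ m.length.bodd) z := by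
  rw [altWord_append, altWord_append, List.length_append, Nat.bodd_add, Bool.xor_assoc]

lemma star_letter (b : Bool) (i : Fin n) : star (letter v b i) = letter v (!b) i := by
  cases b <;> simp [letter]

lemma star_altWord (b : Bool) (l : List (Fin n)) :
    star (altWord v b l) = altWord v (b ^^ l.length.bodd) l.reverse := by
  induction l generalizing b with
  | nil => simp
  | cons a t ih =>
    simp only [altWord_cons, star_mul, ih, star_letter, List.reverse_cons, altWord_append,
      List.length_reverse, List.length_cons, Nat.bodd_succ]
    cases b <;> cases t.length.bodd <;> simp

lemma altWord_mul_star_mul {l₁ l₂ : List (Fin n)} (h₁ : Odd l₁.length) (h₂ : Odd l₂.length)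
    (l₃ : List (Fin n)) :
    altWord v false l₁ * star (altWord v false l₂) * altWord v false l₃ =
      altWord v false (l₁ ++ l₂.reverse ++ l₃) := by
  have hodd : ∀ l : List (Fin n), Odd l.length → l.length.bodd = true := fun l h => by
    simpa [Nat.bodd, Nat.odd_iff] using h
  rw [star_altWord, altWord_append, altWord_append, List.length_append, Nat.bodd_add,
    List.length_reverse, hodd _ h₁, hodd _ h₂]
  rfl

end Words

section GridRelations

open Set

lemma rgVal_mem_span {A : Type*} [AddCommGroup A] [Module ℂ A] {n : ℕ} (u : Fin n → A)
    (i j k : Fin n) : rgVal u i j k ∈ span ℂ (range u) := by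
  unfold rgVal
  split_ifs
  · exact subset_span (mem_range_self k)
  · exact smul_mem _ _ (subset_span (mem_range_self k))
  · exact smul_mem _ _ (subset_span (mem_range_self i))
  · exact zero_mem _

lemma map_rgVal {A A' : Type*} [AddCommGroup A] [Module ℂ A] [AddCommGroup A'] [Module ℂ A']
    {n : ℕ} (f : A →ₗ[ℂ] A') (u : Fin n → A) (i j k : Fin n) :
    f (rgVal u i j k) = rgVal (f ∘ u) i j k := by
  unfold rgVal
  split_ifs <;> simp

def IsRectGrid {B : Type*} [NonUnitalRing B] [StarRing B] [Module ℂ B] {n : ℕ}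
    (v : Fin n → B) : Prop :=
  ∀ i j k, jtp (v i) (v j) (v k) = rgVal v i j k

lemma two_smul_jtp {B : Type*} [NonUnitalRing B] [StarRing B] [Module ℂ B] (x y z : B) :
    (2 : ℂ) • jtp x y z = x * star y * z + z * star y * x := by
  rw [jtp, smul_smul]
  norm_num

variable {B : Type*} [Ring B] [StarRing B] [Algebra ℂ B] [StarModule ℂ B] {n : ℕ}

lemma star_rgVal (v : Fin n → B) (i j k : Fin n) :
    star (rgVal v i j k) = rgVal (star v) i j k := by
  unfold rgVal
  split_ifs <;> simp [star_smul]

variable {v : Fin n → B}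

lemma altWord_triple_add (hv : IsRectGrid v) (b : Bool) (a c d : Fin n) :
    altWord v b [a, c, d] + altWord v b [d, c, a] = (2 : ℂ) • rgVal (letter v b) a c d := by
  cases b
  · change v a * (star (v c) * (v d * 1)) + v d * (star (v c) * (v a * 1)) = 2 • rgVal v a c d
    rw [← hv, two_smul_jtp]
    noncomm_ring
  · change star (v a) * (v c * (star (v d) * 1)) + star (v d) * (v c * (star (v a) * 1)) =
      2 • rgVal (star v) a c d
    rw [← star_rgVal, ← hv, ← star_ofNat (R := ℂ) 2, ← star_smul, two_smul_jtp]
    simp only [star_add, star_mul, star_star]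
    noncomm_ring

lemma altWord_splice_triple_add_mem (hv : IsRectGrid v) (b : Bool) (x z : List (Fin n))
    (a c d : Fin n) :
    altWord v b (x ++ [a, c, d] ++ z) + altWord v b (x ++ [d, c, a] ++ z) ∈
      span ℂ (range fun e => altWord v b (x ++ [e] ++ z)) := by
  set b' := b ^^ x.length.bodd
  let f : B →ₗ[ℂ] B := (LinearMap.mulRight ℂ (altWord v (b' ^^ true) z)).comp
    (LinearMap.mulLeft ℂ (altWord v b x))
  have hf : ∀ m : List (Fin n), m.length.bodd = true →
      altWord v b (x ++ m ++ z) = f (altWord v b' m) := by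
    intro m hm
    rw [altWord_splice, hm]
    rfl
  have hrange : (range fun e => altWord v b (x ++ [e] ++ z)) = f '' range (letter v b') := by
    rw [← range_comp]
    congr 1
    funext e
    rw [hf [e] (by simp), Function.comp_apply, altWord_singleton]
  rw [hf [a, c, d] (by simp), hf [d, c, a] (by simp), ← map_add, altWord_triple_add hv, hrange]
  exact apply_mem_span_image_of_mem_span f (smul_mem _ _ (rgVal_mem_span _ a c d))

end GridRelations

section Lists

variable {α : Type*}

/-- Each entry is smaller than the entry two places later: in an alternating word, the
unstarred and the starred letters both have strictly increasing indices. -/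
def Bisorted [LT α] : List α → Prop
  | a :: c :: d :: t => a < d ∧ Bisorted (c :: d :: t)
  | _ => True

lemma Bisorted.tail [LT α] {a : α} {t : List α} (h : Bisorted (a :: t)) : Bisorted t := by
  rcases t with _ | ⟨c, _ | ⟨d, t⟩⟩
  · trivial
  · trivial
  · exact h.2

lemma bisorted_or_exists_descent [LT α] (l : List α) :
    Bisorted l ∨ ∃ x a c d z, l = x ++ [a, c, d] ++ z ∧ ¬ a < d := by
  induction l with
  | nil => exact Or.inl trivial
  | cons a t ih =>
    rcases ih with h | ⟨x, a', c', d', z, rfl, hlt⟩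
    · rcases t with _ | ⟨c, _ | ⟨d, t⟩⟩
      · exact Or.inl trivial
      · exact Or.inl trivial
      · by_cases had : a < d
        · exact Or.inl ⟨had, h⟩
        · exact Or.inr ⟨[], a, c, d, t, rfl, had⟩
    · exact Or.inr ⟨a :: x, a', c', d', z, rfl, hlt⟩

def odds : List α → List α
  | [] => []
  | [a] => [a]
  | a :: _ :: t => a :: odds t

def evens (l : List α) : List α := odds l.tail

@[simp] lemma odds_nil : odds ([] : List α) = [] := rfl

@[simp] lemma evens_nil : evens ([] : List α) = [] := rfl

@[simp] lemma odds_cons (a : α) (t : List α) : odds (a :: t) = a :: evens t := by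
  cases t <;> rfl

@[simp] lemma evens_cons (a : α) (t : List α) : evens (a :: t) = odds t := rfl

lemma eq_of_odds_eq_of_evens_eq :
    ∀ {l l' : List α}, odds l = odds l' → evens l = evens l' → l = l'
  | [], [], _, _ => rfl
  | [], _ :: _, h, _ | _ :: _, [], h, _ => by simp at h
  | a :: t, a' :: t', h₁, h₂ => by
    simp only [odds_cons, evens_cons, List.cons.injEq] at h₁ h₂
    rw [h₁.1, eq_of_odds_eq_of_evens_eq h₂ h₁.2]

lemma length_odds_evens (l : List α) :
    (odds l).length = (l.length + 1) / 2 ∧ (evens l).length = l.length / 2 := by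
  induction l with
  | nil => simp
  | cons a t ih =>
    rw [odds_cons, evens_cons, List.length_cons, List.length_cons, ih.1, ih.2]
    omega

lemma Bisorted.isChain_odds [LT α] : ∀ {l : List α}, Bisorted l → (odds l).IsChain (· < ·)
  | [], _ | [_], _ | [_, _], _ => by simp
  | a :: c :: d :: t, h => by
    have ih := Bisorted.isChain_odds h.tail.tail
    simp only [odds_cons, evens_cons] at ih ⊢
    exact List.isChain_cons_cons.mpr ⟨h.1, ih⟩

lemma Bisorted.pairwise_odds [Preorder α] {l : List α} (h : Bisorted l) :
    (odds l).Pairwise (· < ·) :=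
  List.isChain_iff_pairwise.mp h.isChain_odds

lemma Bisorted.pairwise_evens [Preorder α] {l : List α} (h : Bisorted l) :
    (evens l).Pairwise (· < ·) := by
  rcases l with _ | ⟨a, t⟩
  · simp
  · exact h.tail.pairwise_odds

def splitByParity [DecidableEq α] (l : List α) : Finset α × Finset α :=
  ((evens l).toFinset, (odds l).toFinset)

lemma injOn_splitByParity [DecidableEq α] [Preorder α] :
    Set.InjOn splitByParity {l : List α | Bisorted l} := by
  intro l hl l' hl' h
  simp only [splitByParity, Prod.mk.injEq] at h
  exact eq_of_odds_eq_of_evens_eq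
    (hl.pairwise_odds.eq_of_mem_iff hl'.pairwise_odds (by simpa using Finset.ext_iff.mp h.2))
    (hl.pairwise_evens.eq_of_mem_iff hl'.pairwise_evens (by simpa using Finset.ext_iff.mp h.1))

end Lists

section Counting

open Finset

def bisortedWords (n : ℕ) : Set (List (Fin n)) := {l | Odd l.length ∧ Bisorted l}

def parityPairs (n : ℕ) : Finset (Finset (Fin n) × Finset (Fin n)) :=
  (Icc 1 n).biUnion fun k => powersetCard (k - 1) univ ×ˢ powersetCard k univ

lemma card_parityPairs_le (n : ℕ) :
    #(parityPairs n) ≤ ∑ k ∈ Icc 1 n, n.choose (k - 1) * n.choose k := by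
  refine card_biUnion_le.trans_eq (sum_congr rfl fun k _ => ?_)
  simp

lemma splitByParity_mem_parityPairs {n : ℕ} {l : List (Fin n)} (hl : l ∈ bisortedWords n) :
    splitByParity l ∈ parityPairs n := by
  obtain ⟨hodd, hs⟩ := hl
  have hnodup := hs.pairwise_odds.nodup
  have hle := hnodup.length_le_card
  obtain ⟨hlen₁, hlen₂⟩ := length_odds_evens l
  rw [Fintype.card_fin] at hle
  rw [Nat.odd_iff] at hodd
  simp only [parityPairs, splitByParity, mem_biUnion, mem_Icc, mem_product, mem_powersetCard,
    subset_univ, true_and, List.toFinset_card_of_nodup hnodup,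
    List.toFinset_card_of_nodup hs.pairwise_evens.nodup]
  exact ⟨(odds l).length, ⟨by omega, hle⟩, by omega, rfl⟩

lemma mk_bisortedWords_le (n : ℕ) :
    Cardinal.mk (bisortedWords n) ≤
      ((∑ k ∈ Icc 1 n, n.choose (k - 1) * n.choose k : ℕ) : Cardinal) :=
  calc Cardinal.mk (bisortedWords n)
      = Cardinal.mk (splitByParity '' bisortedWords n) :=
        (Cardinal.mk_image_eq_of_injOn _ _ (injOn_splitByParity.mono fun _ hl => hl.2)).symm
    _ ≤ Cardinal.mk (parityPairs n : Set _) :=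
        Cardinal.mk_le_mk_of_subset
          (Set.image_subset_iff.mpr fun _ => splitByParity_mem_parityPairs)
    _ = #(parityPairs n) := Cardinal.mk_coe_finset
    _ ≤ _ := by exact_mod_cast card_parityPairs_le n

lemma bisortedWords_finite (n : ℕ) : (bisortedWords n).Finite :=
  Cardinal.lt_aleph0_iff_set_finite.mp ((mk_bisortedWords_le n).trans_lt Cardinal.natCast_lt_aleph0)

end Counting

def lexKey {n : ℕ} (l : List (Fin n)) : ℕ := Nat.ofDigits n (l.reverse.map Fin.val)

lemma lexKey_swap_lt {n : ℕ} (x z : List (Fin n)) (c : Fin n) {a d : Fin n} (hda : d < a) :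
    lexKey (x ++ [d, c, a] ++ z) < lexKey (x ++ [a, c, d] ++ z) := by
  have hn : 2 ≤ n := by have := a.isLt; have : (d : ℕ) < a := hda; omega
  simp only [lexKey, List.reverse_append, List.map_append, Nat.ofDigits_append,
    List.reverse_cons, List.reverse_nil, List.nil_append, List.cons_append, List.map_cons,
    Nat.ofDigits_cons, List.length_map, List.length_reverse]
  have hswap : (a : ℕ) + n * n * d < d + n * n * a := by
    have : (d : ℕ) < a := hda
    nlinarith [Nat.mul_le_mul hn hn]
  refine Nat.add_lt_add_left (Nat.mul_lt_mul_of_pos_left ?_ (by positivity)) _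
  nlinarith

section Letters

open Set

variable {B : Type*} [Ring B] [StarRing B] [Algebra ℂ B] {n : ℕ} {v : Fin n → B}

lemma span_range_le_span_bisorted :
    span ℂ (range v) ≤ span ℂ (altWord v false '' bisortedWords n) :=
  span_mono <| range_subset_iff.mpr fun i =>
    ⟨[i], ⟨odd_one, trivial⟩, altWord_singleton v false i⟩

end Letters

section Spanning

open Set

variable {B : Type*} [Ring B] [StarRing B] [Algebra ℂ B] [StarModule ℂ B] {n : ℕ}
  {v : Fin n → B}

theorem altWord_mem_span_bisorted (hv : IsRectGrid v) (b : Bool) (l : List (Fin n))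
    (hl : Odd l.length) :
    altWord v b l ∈ span ℂ (altWord v b '' bisortedWords n) := by
  obtain hs | ⟨x, a, c, d, z, rfl, hda⟩ := bisorted_or_exists_descent l
  · exact subset_span ⟨l, ⟨hl, hs⟩, rfl⟩
  have hshort (e : Fin n) :
      altWord v b (x ++ [e] ++ z) ∈ span ℂ (altWord v b '' bisortedWords n) :=
    altWord_mem_span_bisorted hv b (x ++ [e] ++ z) (by
      simp only [List.length_append, List.length_cons, List.length_nil, Nat.odd_iff] at hl ⊢
      omega)
  have hsum := span_le.mpr (range_subset_iff.mpr hshort)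
    (altWord_splice_triple_add_mem hv b x z a c d)
  rcases (not_lt.mp hda).eq_or_lt with rfl | hlt
  · have := smul_mem _ (2⁻¹ : ℂ) hsum
    rwa [← two_smul ℂ, smul_smul, inv_mul_cancel₀ two_ne_zero, one_smul] at this
  · have hswap := altWord_mem_span_bisorted hv b (x ++ [d, c, a] ++ z) (by simpa using hl)
    simpa using sub_mem hsum hswap
termination_by (l.length, lexKey l)
decreasing_by
  all_goals subst_vars
  · exact Prod.Lex.left _ _ (by simp)
  · exact Prod.lex_def.mpr (Or.inr ⟨by simp, lexKey_swap_lt x z c hlt⟩)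

lemma mul_star_mul_mem_span {S : Set B}
    (hS : ∀ a ∈ S, ∀ b ∈ S, ∀ c ∈ S, a * star b * c ∈ span ℂ S) {x y z : B}
    (hx : x ∈ span ℂ S) (hy : y ∈ span ℂ S) (hz : z ∈ span ℂ S) :
    x * star y * z ∈ span ℂ S := by
  have hy' : star y ∈ span ℂ (star '' S) :=
    apply_mem_span_image_of_mem_span (starLinearEquiv ℂ (A := B)).toLinearMap hy
  have hmem := mul_mem_mul (mul_mem_mul hx hy') hz
  rw [span_mul_span, span_mul_span] at hmem
  refine span_le.mpr ?_ hmem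
  rintro _ ⟨_, ⟨a, ha, _, ⟨b, hb, rfl⟩, rfl⟩, c, hc, rfl⟩
  exact hS a ha b hb c hc

lemma mul_star_mul_mem_span_bisorted (hv : IsRectGrid v) {x y z : B}
    (hx : x ∈ span ℂ (altWord v false '' bisortedWords n))
    (hy : y ∈ span ℂ (altWord v false '' bisortedWords n))
    (hz : z ∈ span ℂ (altWord v false '' bisortedWords n)) :
    x * star y * z ∈ span ℂ (altWord v false '' bisortedWords n) := by
  refine mul_star_mul_mem_span ?_ hx hy hz
  rintro _ ⟨l₁, hl₁, rfl⟩ _ ⟨l₂, hl₂, rfl⟩ _ ⟨l₃, hl₃, rfl⟩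
  rw [altWord_mul_star_mul v hl₁.1 hl₂.1]
  refine altWord_mem_span_bisorted hv false _ ?_
  simp only [List.length_append, List.length_reverse]
  exact (hl₁.1.add_odd hl₂.1).add_odd hl₃.1

end Spanning

section Operators

open Set

variable {H K : HilbertC} {n : ℕ}

lemma _root_.IsTripleHomInto.isRectGrid_comp {Z : Submodule ℂ (BH H)} {U : Submodule ℂ (BH K)}
    {α : ↥Z →L[ℂ] ↥U} (hα : IsTripleHomInto Z U α) {w : Fin n → ↥Z}
    (hw : IsRectGrid fun i => (w i : BH H)) : IsRectGrid fun i => (α (w i) : BH K) := by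
  intro i j k
  rw [← hα (w i) (w j) (w k) (rgVal w i j k) ((map_rgVal Z.subtype w i j k).trans (hw i j k).symm)]
  exact map_rgVal (U.subtype ∘ₗ α.toLinearMap) w i j k

lemma apply_mem_span_range_comp {M : Type*} [AddCommGroup M] [Module ℂ M] {ι : Type*}
    (u : ι → BH H) (f : ↥(span ℂ (range u)) →ₗ[ℂ] M) (z : ↥(span ℂ (range u))) :
    f z ∈ span ℂ (range fun i => f ⟨u i, subset_span (mem_range_self i)⟩) := by
  have hz : z ∈ span ℂ (((↑) : span ℂ (range u) → BH H) ⁻¹' range u) := by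
    rw [span_span_coe_preimage]
    trivial
  refine span_le.mpr ?_ (apply_mem_span_image_of_mem_span f hz)
  rintro _ ⟨w, ⟨i, hi⟩, rfl⟩
  obtain rfl : w = ⟨u i, subset_span (mem_range_self i)⟩ := Subtype.ext hi.symm
  exact subset_span (mem_range_self i)

theorem rank_troClosure_le {v : Fin n → BH K} (hv : IsRectGrid v) {S : Set (BH K)}
    (hS : S ⊆ span ℂ (range v)) :
    Module.rank ℂ ↥(troClosure S) ≤
      ((∑ k ∈ Finset.Icc 1 n, n.choose (k - 1) * n.choose k : ℕ) : Cardinal) := by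
  have : FiniteDimensional ℂ ↥(span ℂ (altWord v false '' bisortedWords n)) :=
    FiniteDimensional.span_of_finite ℂ ((bisortedWords_finite n).image _)
  have hle : troClosure S ≤ span ℂ (altWord v false '' bisortedWords n) :=
    sInf_le ⟨closed_of_finiteDimensional _, fun _ hx => span_range_le_span_bisorted (hS hx),
      fun _ hx _ hy _ hz => mul_star_mul_mem_span_bisorted hv hx hy hz⟩
  calc Module.rank ℂ ↥(troClosure S)
      ≤ Module.rank ℂ ↥(span ℂ (altWord v false '' bisortedWords n)) := rank_mono hle
    _ ≤ Cardinal.mk (altWord v false '' bisortedWords n) := rank_span_le _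
    _ ≤ Cardinal.mk (bisortedWords n) := Cardinal.mk_image_le
    _ ≤ _ := mk_bisortedWords_le n

end Operators

end RankOneGrid

/-- the universal enveloping TRO of a JC*-triple spanned by a rank-1
rectangular grid with `n` elements has dimension at most
`∑_{k=1}^{n} C(n,k-1) · C(n,k)`. -/
theorem stmt_17 (H₀ Hh : HilbertC) (n : ℕ) (Z : Submodule ℂ (BH H₀))
    (u : Fin n → BH H₀) (hgrid : IsRank1Grid Z u)
    (T : Submodule ℂ (BH Hh)) (ρ : ↥Z →L[ℂ] ↥T) (hUniv : IsUnivTRO Z T ρ) :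
    Module.rank ℂ ↥T ≤
      ((∑ k ∈ Finset.Icc 1 n, n.choose (k - 1) * n.choose k : ℕ) : Cardinal) := by
  obtain ⟨-, rfl, hu⟩ := hgrid
  obtain ⟨-, hρ, hgen, -⟩ := hUniv
  let w : Fin n → Submodule.span ℂ (Set.range u) := fun i =>
    ⟨u i, Submodule.subset_span (Set.mem_range_self i)⟩
  have hv : RankOneGrid.IsRectGrid fun i => (ρ (w i) : BH Hh) := hρ.isRectGrid_comp hu
  have hS : (Set.range fun z => (ρ z : BH Hh)) ⊆
      Submodule.span ℂ (Set.range fun i => (ρ (w i) : BH Hh)) :=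
    Set.range_subset_iff.mpr (RankOneGrid.apply_mem_span_range_comp u (T.subtype ∘ₗ ρ.toLinearMap))
  rw [← hgen]
  exact RankOneGrid.rank_troClosure_le hv hS
end
end
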